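/- arXiv:2602.16172 — 5 statements merged into one kernel-verified Lean document; each statement's English description precedes it below -/
import Mathlib

section
/- Fix reals d₂ > 0, β > 0, S₀ > 0, μ₂ > 0 with βS₀/μ₂ > 1, and θ ∈ ℝ, and for c > 0 define Δ_c(λ) = d₂(e^{λ sin θ} + e^{−λ sin θ} + e^{λ cos θ} + e^{−λ cos θ} − 4) − cλ + βS₀ − μ₂. Then there exist c* > 0 and λ* > 0 such that Δ_{c*}(λ*) = 0 and the derivative of λ ↦ Δ_{c*}(λ) vanishes at λ*; moreover, λ* is the unique root of Δ_{c*}(λ) = 0 in (0, +∞). -/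
noncomputable def charDelta (d₂ β S₀ μ₂ θ c lam : ℝ) : ℝ :=
  d₂ * (Real.exp (lam * Real.sin θ) + Real.exp (-(lam * Real.sin θ)) +
        Real.exp (lam * Real.cos θ) + Real.exp (-(lam * Real.cos θ)) - 4) -
  c * lam + β * S₀ - μ₂

/-!
Write `Δ_c(λ) = g(λ) - cλ` with `g = Δ_0`. Since `g'' ≥ 2 d₂ > 0` and `g(0) = βS₀ - μ₂ > 0`,
the function `λ g'(λ) - g(λ)` grows at least like `d₂ λ² - g(0)`, so it vanishes at some
`λ* > 0`: the line through the origin with slope `c* = g'(λ*)` is tangent to the graph of `g`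
at `λ*`, and `c* > 0` because `c* λ* = g(λ*) > 0`. Then `Δ_{c*}` is strictly convex, vanishes at
`λ*` and has a critical point there, so `λ*` is its unique zero.
-/

open Real Set

section TangentFromOrigin

variable {g g' g'' : ℝ → ℝ} {m : ℝ}

lemma le_mul_deriv_sub_of_le_deriv2 (hg : ∀ x, HasDerivAt g (g' x) x)
    (hg' : ∀ x, HasDerivAt g' (g'' x) x) (hg'' : ∀ x, m ≤ g'' x) {x : ℝ} (hx : 0 ≤ x) :
    m * x ^ 2 / 2 - g 0 ≤ x * g' x - g x := by
  set φ : ℝ → ℝ := fun y => y * g' y - g y - m * y ^ 2 / 2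
  have hφ : ∀ y, HasDerivAt φ (y * (g'' y - m)) y := fun y => by
    refine ((((hasDerivAt_id' y).mul (hg' y)).sub (hg y)).sub
      ((hasDerivAt_pow 2 y).const_mul m |>.div_const 2)).congr_deriv ?_
    ring
  have hmono : MonotoneOn φ (Ici 0) := by
    refine monotoneOn_of_hasDerivWithinAt_nonneg (convex_Ici 0)
      (fun y _ => (hφ y).continuousAt.continuousWithinAt)
      (fun y _ => (hφ y).hasDerivWithinAt) fun y hy => ?_
    rw [interior_Ici] at hy
    exact mul_nonneg (le_of_lt hy) (sub_nonneg.2 (hg'' y))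
  have := hmono self_mem_Ici hx hx
  simp only [φ] at this
  linarith

lemma exists_pos_eq_mul_deriv_of_le_deriv2 (hg : ∀ x, HasDerivAt g (g' x) x)
    (hg' : ∀ x, HasDerivAt g' (g'' x) x) (hm : 0 < m) (hg'' : ∀ x, m ≤ g'' x) (hg0 : 0 < g 0) :
    ∃ x, 0 < x ∧ g x = x * g' x := by
  set X := 1 + 2 * g 0 / m
  have hX : 2 * g 0 / m < X ^ 2 := by nlinarith [div_pos (mul_pos two_pos hg0) hm]
  have hψX : 0 < X * g' X - g X := by
    have := le_mul_deriv_sub_of_le_deriv2 hg hg' hg'' (x := X) (by positivity)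
    rw [div_lt_iff₀ hm] at hX
    linarith
  have hcont : Continuous fun y => y * g' y - g y :=
    continuous_iff_continuousAt.2 fun y =>
      (continuousAt_id.mul (hg' y).continuousAt).sub (hg y).continuousAt
  obtain ⟨x, hx, hψx⟩ := intermediate_value_Ioo (by positivity : (0 : ℝ) ≤ X)
    hcont.continuousOn ⟨by simpa using hg0, hψX⟩
  exact ⟨x, hx.1, by linarith [hψx]⟩

end TangentFromOrigin

lemma StrictConvexOn.eq_of_hasDerivAt_zero_of_apply_eq {f : ℝ → ℝ} {a b : ℝ}
    (hf : StrictConvexOn ℝ univ f) (ha : HasDerivAt f 0 a) (hb : f b = f a) : b = a := by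
  have hmin : IsMinOn f univ a := hf.convexOn.isMinOn_of_rightDeriv_eq_zero (by simp)
    (ha.hasDerivWithinAt.derivWithin (uniqueDiffWithinAt_Ioi a))
  exact hf.eq_of_isMinOn (fun y _ => hb ▸ hmin (mem_univ y)) hmin (mem_univ b) (mem_univ a)

section charDelta

variable (d₂ β S₀ μ₂ θ : ℝ)

noncomputable def charDelta' (lam : ℝ) : ℝ :=
  2 * d₂ * (sin θ * sinh (lam * sin θ) + cos θ * sinh (lam * cos θ))

noncomputable def charDelta'' (lam : ℝ) : ℝ :=
  2 * d₂ * (sin θ ^ 2 * cosh (lam * sin θ) + cos θ ^ 2 * cosh (lam * cos θ))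

lemma charDelta_eq_cosh (c lam : ℝ) :
    charDelta d₂ β S₀ μ₂ θ c lam =
      2 * d₂ * (cosh (lam * sin θ) + cosh (lam * cos θ) - 2) - c * lam + (β * S₀ - μ₂) := by
  simp only [charDelta, cosh_eq]
  ring

lemma charDelta_eq_sub (c lam : ℝ) :
    charDelta d₂ β S₀ μ₂ θ c lam = charDelta d₂ β S₀ μ₂ θ 0 lam - c * lam := by
  simp only [charDelta]
  ring

lemma hasDerivAt_charDelta (c lam : ℝ) :
    HasDerivAt (charDelta d₂ β S₀ μ₂ θ c) (charDelta' d₂ θ lam - c) lam := by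
  rw [funext (charDelta_eq_cosh d₂ β S₀ μ₂ θ c)]
  have hs := (hasDerivAt_mul_const (sin θ)).cosh (x := lam)
  have hc := (hasDerivAt_mul_const (cos θ)).cosh (x := lam)
  refine (((((hs.add hc).sub_const 2).const_mul (2 * d₂)).sub
    ((hasDerivAt_id' lam).const_mul c)).add_const (β * S₀ - μ₂)).congr_deriv ?_
  simp only [charDelta']
  ring

lemma hasDerivAt_charDelta' (lam : ℝ) :
    HasDerivAt (charDelta' d₂ θ) (charDelta'' d₂ θ lam) lam := by
  have hs := (hasDerivAt_mul_const (sin θ)).sinh (x := lam)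
  have hc := (hasDerivAt_mul_const (cos θ)).sinh (x := lam)
  refine (((hs.const_mul (sin θ)).add (hc.const_mul (cos θ))).const_mul (2 * d₂)).congr_deriv ?_
  simp only [charDelta'']
  ring

variable {d₂}

lemma two_mul_le_charDelta'' (hd₂ : 0 ≤ d₂) (lam : ℝ) : 2 * d₂ ≤ charDelta'' d₂ θ lam := by
  have hs := mul_le_mul_of_nonneg_left (one_le_cosh (lam * sin θ)) (sq_nonneg (sin θ))
  have hc := mul_le_mul_of_nonneg_left (one_le_cosh (lam * cos θ)) (sq_nonneg (cos θ))
  have h := mul_le_mul_of_nonneg_left (add_le_add hs hc) (by positivity : 0 ≤ 2 * d₂)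
  rw [mul_one, mul_one, sin_sq_add_cos_sq, mul_one] at h
  exact h

lemma sub_le_charDelta (hd₂ : 0 ≤ d₂) (c lam : ℝ) :
    β * S₀ - μ₂ - c * lam ≤ charDelta d₂ β S₀ μ₂ θ c lam := by
  rw [charDelta_eq_cosh]
  nlinarith [one_le_cosh (lam * sin θ), one_le_cosh (lam * cos θ)]

lemma strictConvexOn_charDelta (hd₂ : 0 < d₂) (c : ℝ) :
    StrictConvexOn ℝ univ (charDelta d₂ β S₀ μ₂ θ c) := by
  have hderiv : deriv (charDelta d₂ β S₀ μ₂ θ c) = fun lam => charDelta' d₂ θ lam - c :=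
    funext fun lam => (hasDerivAt_charDelta d₂ β S₀ μ₂ θ c lam).deriv
  refine StrictMono.strictConvexOn_univ_of_deriv
    (continuous_iff_continuousAt.2 fun lam => (hasDerivAt_charDelta d₂ β S₀ μ₂ θ c lam).continuousAt)
    ?_
  rw [hderiv]
  exact strictMono_of_hasDerivAt_pos (fun lam => (hasDerivAt_charDelta' d₂ θ lam).sub_const c)
    fun lam => by linarith [two_mul_le_charDelta'' θ hd₂.le lam]

end charDelta

theorem stmt_1_general (d₂ β S₀ μ₂ θ : ℝ)
    (hd₂ : 0 < d₂) (hμ₂ : 0 < μ₂)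
    (hR₀ : 1 < β * S₀ / μ₂) :
    ∃ cstar lamstar : ℝ, 0 < cstar ∧ 0 < lamstar ∧
      charDelta d₂ β S₀ μ₂ θ cstar lamstar = 0 ∧
      deriv (charDelta d₂ β S₀ μ₂ θ cstar) lamstar = 0 ∧
      ∀ lam : ℝ, 0 < lam → charDelta d₂ β S₀ μ₂ θ cstar lam = 0 → lam = lamstar := by
  have hK : 0 < β * S₀ - μ₂ := by linarith [(lt_div_iff₀ hμ₂).1 hR₀]
  have hg0 : 0 < charDelta d₂ β S₀ μ₂ θ 0 0 := by
    linarith [sub_le_charDelta β S₀ μ₂ θ hd₂.le 0 0]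
  obtain ⟨lamstar, hlam, htangent⟩ := exists_pos_eq_mul_deriv_of_le_deriv2
    (fun x => by simpa using hasDerivAt_charDelta d₂ β S₀ μ₂ θ 0 x)
    (hasDerivAt_charDelta' d₂ θ) (by positivity) (two_mul_le_charDelta'' θ hd₂.le) hg0
  set cstar := charDelta' d₂ θ lamstar
  have hzero : charDelta d₂ β S₀ μ₂ θ cstar lamstar = 0 := by
    rw [charDelta_eq_sub, htangent]
    ring
  have hcrit : HasDerivAt (charDelta d₂ β S₀ μ₂ θ cstar) 0 lamstar := by
    exact (hasDerivAt_charDelta d₂ β S₀ μ₂ θ cstar lamstar).congr_deriv (sub_self _)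
  have hcpos : 0 < cstar := by
    have := sub_le_charDelta β S₀ μ₂ θ hd₂.le 0 lamstar
    rw [htangent] at this
    exact pos_of_mul_pos_right (by linarith) hlam.le
  refine ⟨cstar, lamstar, hcpos, hlam, hzero, hcrit.deriv, fun lam _ hlam0 => ?_⟩
  exact (strictConvexOn_charDelta β S₀ μ₂ θ hd₂ cstar).eq_of_hasDerivAt_zero_of_apply_eq hcrit
    (hlam0.trans hzero.symm)

theorem stmt_1 (d₂ β S₀ μ₂ θ : ℝ)
    (hd₂ : 0 < d₂) (hβ : 0 < β) (hS₀ : 0 < S₀) (hμ₂ : 0 < μ₂)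
    (hR₀ : 1 < β * S₀ / μ₂) :
    ∃ cstar lamstar : ℝ, 0 < cstar ∧ 0 < lamstar ∧
      charDelta d₂ β S₀ μ₂ θ cstar lamstar = 0 ∧
      deriv (charDelta d₂ β S₀ μ₂ θ cstar) lamstar = 0 ∧
      ∀ lam : ℝ, 0 < lam → charDelta d₂ β S₀ μ₂ θ cstar lam = 0 → lam = lamstar :=
  stmt_1_general d₂ β S₀ μ₂ θ hd₂ hμ₂ hR₀
end

section
/- Let Λ, β, α, μ₁, μ₂, d₂ > 0, θ ∈ ℝ, S₀ = Λ/μ₁, and assume βS₀/μ₂ > 1. Let c > c* (the critical speed) and let λ₁ denote the smaller positive root of Δ_c(λ) = d₂(e^{λ sin θ} + e^{−λ sin θ} + e^{λ cos θ} + e^{−λ cos θ} − 4) − cλ + βS₀ − μ₂ = 0. Fix I₀ ≥ (βS₀ − μ₂)/(αμ₂) and define I⁺(ξ) = min{e^{λ₁ξ}, I₀}. Then for every ξ ≠ (1/λ₁)·ln I₀, c·(I⁺)'(ξ) ≥ d₂𝔍[I⁺](ξ) + βS₀I⁺(ξ)/(1 + αI⁺(ξ)) − μ₂I⁺(ξ),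 where 𝔍[φ](ξ) = φ(ξ + sin θ) + φ(ξ − sin θ) + φ(ξ + cos θ) + φ(ξ − cos θ) − 4φ(ξ). -/
/-- Discrete Laplacian in direction `θ`. -/
noncomputable def lap (θ : ℝ) (φ : ℝ → ℝ) (ξ : ℝ) : ℝ :=
  φ (ξ + Real.sin θ) + φ (ξ - Real.sin θ) + φ (ξ + Real.cos θ) + φ (ξ - Real.cos θ) - 4 * φ ξ

open Real Topology

section DiscreteLaplacian

variable (θ : ℝ)

theorem lap_le_lap_of_le_of_eq {φ ψ : ℝ → ℝ} {ξ : ℝ} (hle : ∀ x, φ x ≤ ψ x) (heq : φ ξ = ψ ξ) :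
    lap θ φ ξ ≤ lap θ ψ ξ := by
  unfold lap
  linarith [hle (ξ + sin θ), hle (ξ - sin θ), hle (ξ + cos θ), hle (ξ - cos θ)]

theorem lap_const (a ξ : ℝ) : lap θ (fun _ => a) ξ = 0 := by
  simp only [lap]; ring

theorem lap_exp_mul (lam ξ : ℝ) :
    lap θ (fun x => exp (lam * x)) ξ =
      (exp (lam * sin θ) + exp (-(lam * sin θ)) + exp (lam * cos θ) + exp (-(lam * cos θ)) - 4) *
        exp (lam * ξ) := by
  simp only [lap, mul_add, mul_sub, exp_add, exp_sub, exp_neg]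
  ring

theorem mul_lap_exp_mul_of_charDelta_eq_zero {d₂ β S₀ μ₂ c lam : ℝ}
    (hroot : charDelta d₂ β S₀ μ₂ θ c lam = 0) (ξ : ℝ) :
    d₂ * lap θ (fun x => exp (lam * x)) ξ = (c * lam - β * S₀ + μ₂) * exp (lam * ξ) := by
  rw [lap_exp_mul]
  unfold charDelta at hroot
  linear_combination exp (lam * ξ) * hroot

end DiscreteLaplacian

section Reaction

variable {a α μ I : ℝ}

theorem mul_div_one_add_mul_le_mul (ha : 0 ≤ a) (hα : 0 ≤ α) (hI : 0 ≤ I) :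
    a * I / (1 + α * I) ≤ a * I :=
  div_le_self (mul_nonneg ha hI) (by nlinarith)

theorem mul_div_one_add_mul_le_of_le (hα : 0 < α) (hμ : 0 < μ) (hI : 0 < I)
    (hIge : (a - μ) / (α * μ) ≤ I) :
    a * I / (1 + α * I) ≤ μ * I := by
  rw [div_le_iff₀ (by positivity)]
  rw [div_le_iff₀ (by positivity)] at hIge
  nlinarith

end Reaction

section Truncation

variable {lam I₀ : ℝ}

theorem exp_mul_lt_iff (hlam : 0 < lam) (hI₀ : 0 < I₀) (x : ℝ) :
    exp (lam * x) < I₀ ↔ x < 1 / lam * log I₀ := by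
  rw [← lt_log_iff_exp_lt hI₀, one_div_mul_eq_div, lt_div_iff₀' hlam]

theorem min_exp_mul_eventuallyEq_exp (hlam : 0 < lam) (hI₀ : 0 < I₀) {ξ : ℝ}
    (hξ : ξ < 1 / lam * log I₀) :
    (fun x => min (exp (lam * x)) I₀) =ᶠ[𝓝 ξ] fun x => exp (lam * x) := by
  filter_upwards [Iio_mem_nhds hξ] with x hx
  exact min_eq_left ((exp_mul_lt_iff hlam hI₀ x).2 hx).le

theorem min_exp_mul_eventuallyEq_const (hlam : 0 < lam) (hI₀ : 0 < I₀) {ξ : ℝ}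
    (hξ : 1 / lam * log I₀ < ξ) :
    (fun x => min (exp (lam * x)) I₀) =ᶠ[𝓝 ξ] fun _ => I₀ := by
  filter_upwards [Ioi_mem_nhds hξ] with x hx
  exact min_eq_right (not_lt.1 fun h => (exp_mul_lt_iff hlam hI₀ x).1 h |>.not_gt hx)

theorem deriv_exp_mul (lam ξ : ℝ) : deriv (fun x => exp (lam * x)) ξ = lam * exp (lam * ξ) := by
  simpa [mul_comm] using ((hasDerivAt_id' ξ).const_mul lam).exp.deriv

end Truncation

theorem stmt_5_general (β α μ₂ d₂ θ : ℝ)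
    (hα : 0 < α) (hμ₂ : 0 < μ₂) (hd₂ : 0 < d₂)
    (S₀ : ℝ) (hR₀ : 1 < β * S₀ / μ₂)
    (c lam₁ : ℝ)
    (hlam₁ : 0 < lam₁) (hroot : charDelta d₂ β S₀ μ₂ θ c lam₁ = 0)
    (I₀ : ℝ) (hI₀ : (β * S₀ - μ₂) / (α * μ₂) ≤ I₀)
    (Iplus : ℝ → ℝ) (hIplus : ∀ ξ, Iplus ξ = min (Real.exp (lam₁ * ξ)) I₀) :
    ∀ ξ : ℝ, ξ ≠ (1 / lam₁) * Real.log I₀ →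
      d₂ * lap θ Iplus ξ + β * S₀ * Iplus ξ / (1 + α * Iplus ξ) - μ₂ * Iplus ξ
        ≤ c * deriv Iplus ξ := by
  intro ξ hξ
  have hI : Iplus = fun x => min (exp (lam₁ * x)) I₀ := funext hIplus
  have hμβ : μ₂ < β * S₀ := (one_lt_div hμ₂).1 hR₀
  have hI₀pos : 0 < I₀ := (div_pos (by linarith) (by positivity)).trans_le hI₀
  rcases hξ.lt_or_gt with hlt | hgt
  · have hloc : Iplus =ᶠ[𝓝 ξ] _ := hI ▸ min_exp_mul_eventuallyEq_exp hlam₁ hI₀pos hlt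
    have hlap := mul_le_mul_of_nonneg_left (lap_le_lap_of_le_of_eq θ
      (fun x => (hIplus x).trans_le (min_le_left _ I₀)) hloc.eq_of_nhds) hd₂.le
    have hreact := mul_div_one_add_mul_le_mul (a := β * S₀) (by linarith) hα.le (exp_pos (lam₁ * ξ)).le
    rw [mul_lap_exp_mul_of_charDelta_eq_zero θ hroot] at hlap
    rw [hloc.deriv_eq, deriv_exp_mul, hloc.eq_of_nhds]
    linarith
  · have hloc : Iplus =ᶠ[𝓝 ξ] _ := hI ▸ min_exp_mul_eventuallyEq_const hlam₁ hI₀pos hgt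
    have hlap := mul_le_mul_of_nonneg_left (lap_le_lap_of_le_of_eq θ
      (fun x => (hIplus x).trans_le (min_le_right _ I₀)) hloc.eq_of_nhds) hd₂.le
    have hreact := mul_div_one_add_mul_le_of_le hα hμ₂ hI₀pos hI₀
    rw [lap_const, mul_zero] at hlap
    rw [hloc.deriv_eq, deriv_const, hloc.eq_of_nhds]
    linarith

theorem stmt_5 (Λ β α μ₁ μ₂ d₂ θ : ℝ)
    (hΛ : 0 < Λ) (hβ : 0 < β) (hα : 0 < α) (hμ₁ : 0 < μ₁) (hμ₂ : 0 < μ₂) (hd₂ : 0 < d₂)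
    (S₀ : ℝ) (hS₀ : S₀ = Λ / μ₁) (hR₀ : 1 < β * S₀ / μ₂)
    (cstar lamstar c lam₁ : ℝ)
    (hcstar : 0 < cstar) (hlamstar : 0 < lamstar)
    (hcritroot : charDelta d₂ β S₀ μ₂ θ cstar lamstar = 0)
    (hcritderiv : deriv (charDelta d₂ β S₀ μ₂ θ cstar) lamstar = 0)
    (hc : cstar < c)
    (hlam₁ : 0 < lam₁) (hroot : charDelta d₂ β S₀ μ₂ θ c lam₁ = 0)
    (hsmallest : ∀ lam : ℝ, 0 < lam → charDelta d₂ β S₀ μ₂ θ c lam = 0 → lam₁ ≤ lam)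
    (I₀ : ℝ) (hI₀ : (β * S₀ - μ₂) / (α * μ₂) ≤ I₀)
    (Iplus : ℝ → ℝ) (hIplus : ∀ ξ, Iplus ξ = min (Real.exp (lam₁ * ξ)) I₀) :
    ∀ ξ : ℝ, ξ ≠ (1 / lam₁) * Real.log I₀ →
      d₂ * lap θ Iplus ξ + β * S₀ * Iplus ξ / (1 + α * Iplus ξ) - μ₂ * Iplus ξ
        ≤ c * deriv Iplus ξ :=
  stmt_5_general β α μ₂ d₂ θ hα hμ₂ hd₂ S₀ hR₀ c lam₁ hlam₁ hroot I₀ hI₀ Iplus hIplus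
end

section
/- Let Λ, β, α, μ₁, μ₂, d₁, d₂ > 0, θ ∈ ℝ, S₀ = Λ/μ₁, βS₀/μ₂ > 1, c > c*, and let λ₁ < λ₂ be the two positive roots of Δ_c. Let ε₁ ∈ (0, λ₁) and M₁ > 1 be as in the lower-solution lemma for S⁻(ξ) = max{S₀(1 − M₁e^{ε₁ξ}), 0}. Then there exist ε₂ > 0 sufficiently small with 0 < ε₂ < min{λ₁, λ₂ − λ₁} and M₂ > 1 sufficiently large such that the function I⁻(ξ) = max{e^{λ₁ξ}(1 − M₂e^{ε₂ξ}), 0} satisfies, for every ξ ≠ (1/ε₂)·ln(1/M₂), the inequality c·(I⁻)'(ξ) ≤ d₂𝔍[I⁻](ξ) + βS⁻(ξ)I⁻(ξ)/(1 + αI⁻(ξ)) − μ₂I⁻(ξ), where 𝔍[φ](ξ) = φ(ξ + sin θ) + φ(ξ − sin θ) + φ(ξ + cos θ) + φ(ξ − cos θ) − 4φ(ξ). -/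
open Real

lemma lap_sub_const_mul (θ M : ℝ) (f g : ℝ → ℝ) (ξ : ℝ) :
    lap θ (fun x => f x - M * g x) ξ = lap θ f ξ - M * lap θ g ξ := by
  simp only [lap]
  ring

lemma lap_le_lap {θ ξ : ℝ} {f g : ℝ → ℝ} (hfg : ∀ x, f x ≤ g x) (hξ : f ξ = g ξ) :
    lap θ f ξ ≤ lap θ g ξ := by
  simp only [lap, hξ]
  linarith [hfg (ξ + sin θ), hfg (ξ - sin θ), hfg (ξ + cos θ), hfg (ξ - cos θ)]

lemma charDelta_mul_exp (d₂ β S₀ μ₂ θ c lam ξ : ℝ) :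
    charDelta d₂ β S₀ μ₂ θ c lam * exp (lam * ξ) =
      d₂ * lap θ (fun x => exp (lam * x)) ξ - c * (lam * exp (lam * ξ))
        + (β * S₀ - μ₂) * exp (lam * ξ) := by
  simp only [charDelta, lap, mul_add, mul_sub, exp_add, exp_sub, exp_neg]
  ring

noncomputable def lowerProfile (lam ε M x : ℝ) : ℝ :=
  exp (lam * x) * (1 - M * exp (ε * x))

lemma lowerProfile_eq (lam ε M x : ℝ) :
    lowerProfile lam ε M x = exp (lam * x) - M * exp ((lam + ε) * x) := by
  rw [lowerProfile, add_mul, exp_add]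
  ring

lemma hasDerivAt_lowerProfile (lam ε M ξ : ℝ) :
    HasDerivAt (lowerProfile lam ε M)
      (lam * exp (lam * ξ) - M * ((lam + ε) * exp ((lam + ε) * ξ))) ξ := by
  have hexp (k : ℝ) : HasDerivAt (fun x => exp (k * x)) (k * exp (k * ξ)) ξ := by
    simpa [mul_comm] using ((hasDerivAt_id ξ).const_mul k).exp
  rw [show lowerProfile lam ε M = _ from funext (lowerProfile_eq lam ε M)]
  exact (hexp lam).sub ((hexp (lam + ε)).const_mul M)

lemma linearized_lowerProfile (d₂ β S₀ μ₂ θ c lam ε M ξ : ℝ) :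
    d₂ * lap θ (lowerProfile lam ε M) ξ
        - c * (lam * exp (lam * ξ) - M * ((lam + ε) * exp ((lam + ε) * ξ)))
        + (β * S₀ - μ₂) * lowerProfile lam ε M ξ =
      charDelta d₂ β S₀ μ₂ θ c lam * exp (lam * ξ)
        - M * (charDelta d₂ β S₀ μ₂ θ c (lam + ε) * exp ((lam + ε) * ξ)) := by
  rw [show lowerProfile lam ε M = _ from funext (lowerProfile_eq lam ε M), lap_sub_const_mul,
    charDelta_mul_exp, charDelta_mul_exp]
  beta_reduce
  ring

lemma mul_exp_lt_one_iff {ε M ξ : ℝ} (hε : 0 < ε) (hM : 0 < M) :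
    M * exp (ε * ξ) < 1 ↔ ξ < 1 / ε * log (1 / M) := by
  rw [← lt_div_iff₀' hM, ← lt_log_iff_exp_lt (by positivity), one_div_mul_eq_div,
    lt_div_iff₀' hε]

lemma lowerProfile_pos_iff {lam ε M ξ : ℝ} :
    0 < lowerProfile lam ε M ξ ↔ M * exp (ε * ξ) < 1 := by
  rw [lowerProfile, mul_pos_iff_of_pos_left (exp_pos _), sub_pos]

section Threshold

variable {lam ε M ξ : ℝ}

lemma deriv_max_lowerProfile_of_lt (hε : 0 < ε) (hM : 0 < M) (hξ : ξ < 1 / ε * log (1 / M)) :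
    deriv (fun x => max (lowerProfile lam ε M x) 0) ξ =
      lam * exp (lam * ξ) - M * ((lam + ε) * exp ((lam + ε) * ξ)) := by
  have hev : (fun x => max (lowerProfile lam ε M x) 0) =ᶠ[nhds ξ] lowerProfile lam ε M := by
    filter_upwards [Iio_mem_nhds hξ] with x hx
    exact max_eq_left (lowerProfile_pos_iff.2 ((mul_exp_lt_one_iff hε hM).2 hx)).le
  rw [hev.deriv_eq, (hasDerivAt_lowerProfile lam ε M ξ).deriv]

lemma lowerProfile_nonpos_of_le (hε : 0 < ε) (hM : 0 < M) (hξ : 1 / ε * log (1 / M) ≤ ξ) :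
    lowerProfile lam ε M ξ ≤ 0 := by
  rw [← not_lt, lowerProfile_pos_iff, mul_exp_lt_one_iff hε hM]
  exact hξ.not_gt

lemma deriv_max_lowerProfile_of_gt (hε : 0 < ε) (hM : 0 < M)
    (hξ : 1 / ε * log (1 / M) < ξ) :
    deriv (fun x => max (lowerProfile lam ε M x) 0) ξ = 0 := by
  have hev : (fun x => max (lowerProfile lam ε M x) 0) =ᶠ[nhds ξ] fun _ => 0 := by
    filter_upwards [Ioi_mem_nhds hξ] with x hx
    exact max_eq_right (lowerProfile_nonpos_of_le hε hM hx.le)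
  rw [hev.deriv_eq, deriv_const]

end Threshold

lemma sub_div_one_add_mul_le {α S S₀ F : ℝ} (hα : 0 ≤ α) (hS : 0 ≤ S) (hSS₀ : S ≤ S₀)
    (hF : 0 ≤ F) : S₀ - S / (1 + α * F) ≤ S₀ - S + α * S₀ * F := by
  have hαF : 0 ≤ α * F := mul_nonneg hα hF
  have hdiv : S - α * S * F ≤ S / (1 + α * F) := by
    rw [le_div_iff₀ (by positivity)]
    nlinarith [mul_nonneg hS (sq_nonneg (α * F))]
  nlinarith [mul_le_mul_of_nonneg_left hSS₀ hαF]

lemma infection_excess_le {β α S₀ M₁ E F A B : ℝ} (hβ : 0 ≤ β) (hα : 0 ≤ α) (hS₀ : 0 ≤ S₀)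
    (hM₁ : 0 ≤ M₁) (hE : 0 ≤ E) (hF : 0 ≤ F) (hFA : F ≤ A) (hEB : E ≤ B) (hAB : A ≤ B) :
    β * S₀ * F - β * max (S₀ * (1 - M₁ * E)) 0 * F / (1 + α * F) ≤
      β * S₀ * (M₁ + α) * (A * B) := by
  set S := max (S₀ * (1 - M₁ * E)) 0
  have hS : 0 ≤ S := le_max_right _ _
  have hSS₀ : S ≤ S₀ := max_le (by nlinarith [mul_nonneg hS₀ (mul_nonneg hM₁ hE)]) hS₀
  have hgap : S₀ - S ≤ S₀ * M₁ * E := by linarith [le_max_left (S₀ * (1 - M₁ * E)) 0]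
  have hA : 0 ≤ A := hF.trans hFA
  calc β * S₀ * F - β * S * F / (1 + α * F) = β * F * (S₀ - S / (1 + α * F)) := by ring
    _ ≤ β * F * (S₀ - S + α * S₀ * F) := by gcongr; exact sub_div_one_add_mul_le hα hS hSS₀ hF
    _ ≤ β * A * (S₀ * M₁ * E + α * S₀ * A) := by gcongr
    _ ≤ β * A * (S₀ * M₁ * B + α * S₀ * B) := by gcongr
    _ = β * S₀ * (M₁ + α) * (A * B) := by ring

section LowerSolution

variable {d₂ β α S₀ μ₂ θ c lam ε M ξ : ℝ}

lemma lowerSolution_ineq_of_lt_threshold {ε₁ M₁ : ℝ} (hd₂ : 0 ≤ d₂) (hβ : 0 ≤ β) (hα : 0 ≤ α)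
    (hS₀ : 0 ≤ S₀) (hM₁ : 0 ≤ M₁) (hε : 0 < ε) (hεε₁ : ε ≤ ε₁) (hεlam : ε ≤ lam) (hM : 1 < M)
    (hroot : charDelta d₂ β S₀ μ₂ θ c lam = 0)
    (hMD : β * S₀ * (M₁ + α) ≤ M * -charDelta d₂ β S₀ μ₂ θ c (lam + ε))
    (hξ : ξ < 1 / ε * log (1 / M)) :
    c * deriv (fun x => max (lowerProfile lam ε M x) 0) ξ ≤
      d₂ * lap θ (fun x => max (lowerProfile lam ε M x) 0) ξ
        + β * max (S₀ * (1 - M₁ * exp (ε₁ * ξ))) 0 * max (lowerProfile lam ε M ξ) 0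
            / (1 + α * max (lowerProfile lam ε M ξ) 0)
        - μ₂ * max (lowerProfile lam ε M ξ) 0 := by
  have hM0 : 0 < M := by linarith
  have hMξ : M * exp (ε * ξ) < 1 := (mul_exp_lt_one_iff hε hM0).2 hξ
  have hF : 0 < lowerProfile lam ε M ξ := lowerProfile_pos_iff.2 hMξ
  have hξ0 : ξ ≤ 0 := by
    have : exp (ε * ξ) < 1 := by nlinarith [exp_pos (ε * ξ)]
    exact (neg_of_mul_neg_right (exp_lt_one_iff.1 this) hε.le).le
  have hFA : lowerProfile lam ε M ξ ≤ exp (lam * ξ) := by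
    rw [lowerProfile_eq]
    linarith [mul_pos hM0 (exp_pos ((lam + ε) * ξ))]
  have hexcess := infection_excess_le (B := exp (ε * ξ)) hβ hα hS₀ hM₁ (exp_pos (ε₁ * ξ)).le
    hF.le hFA (exp_le_exp.2 (by nlinarith)) (exp_le_exp.2 (by nlinarith))
  have hlap : d₂ * lap θ (lowerProfile lam ε M) ξ ≤
      d₂ * lap θ (fun x => max (lowerProfile lam ε M x) 0) ξ :=
    mul_le_mul_of_nonneg_left (lap_le_lap (fun x => le_max_left _ _) (max_eq_left hF.le).symm) hd₂
  have hid := linearized_lowerProfile d₂ β S₀ μ₂ θ c lam ε M ξ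
  rw [hroot, zero_mul, zero_sub] at hid
  have hMD' := mul_le_mul_of_nonneg_right hMD (exp_pos ((lam + ε) * ξ)).le
  have hexp : exp ((lam + ε) * ξ) = exp (lam * ξ) * exp (ε * ξ) := by rw [add_mul, exp_add]
  rw [deriv_max_lowerProfile_of_lt hε hM0 hξ, max_eq_left hF.le]
  rw [hexp] at hid hMD' ⊢
  linarith

lemma lowerSolution_ineq_of_gt_threshold (S : ℝ) (hd₂ : 0 ≤ d₂) (hε : 0 < ε) (hM : 0 < M)
    (hξ : 1 / ε * log (1 / M) < ξ) :
    c * deriv (fun x => max (lowerProfile lam ε M x) 0) ξ ≤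
      d₂ * lap θ (fun x => max (lowerProfile lam ε M x) 0) ξ
        + β * S * max (lowerProfile lam ε M ξ) 0 / (1 + α * max (lowerProfile lam ε M ξ) 0)
        - μ₂ * max (lowerProfile lam ε M ξ) 0 := by
  have hF := lowerProfile_nonpos_of_le (lam := lam) hε hM hξ.le
  have hlap : lap θ (fun _ => 0) ξ ≤ lap θ (fun x => max (lowerProfile lam ε M x) 0) ξ :=
    lap_le_lap (fun x => le_max_right _ _) (max_eq_right hF).symm
  rw [show lap θ (fun _ => 0) ξ = 0 by simp [lap]] at hlap
  rw [deriv_max_lowerProfile_of_gt hε hM hξ, max_eq_right hF]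
  simp only [mul_zero, zero_div, add_zero, sub_zero]
  exact mul_nonneg hd₂ hlap

end LowerSolution

theorem stmt_7_general (Λ β α μ₁ μ₂ d₂ θ : ℝ)
    (hΛ : 0 < Λ) (hβ : 0 < β) (hα : 0 < α) (hμ₁ : 0 < μ₁)
    (hd₂ : 0 < d₂)
    (S₀ : ℝ) (hS₀ : S₀ = Λ / μ₁)
    (c lam₁ lam₂ : ℝ)
    (hlam₁ : 0 < lam₁) (hlam₁₂ : lam₁ < lam₂)
    (hroot₁ : charDelta d₂ β S₀ μ₂ θ c lam₁ = 0)
    (hneg : ∀ lam : ℝ, lam₁ < lam → lam < lam₂ → charDelta d₂ β S₀ μ₂ θ c lam < 0)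
    (Sminus : ℝ → ℝ)
    (ε₁ M₁ : ℝ) (hε₁ : 0 < ε₁) (hM₁ : 1 < M₁)
    (hSminus : ∀ ξ, Sminus ξ = max (S₀ * (1 - M₁ * Real.exp (ε₁ * ξ))) 0) :
    ∃ ε₂ M₂ : ℝ, 0 < ε₂ ∧ ε₂ < min lam₁ (lam₂ - lam₁) ∧ 1 < M₂ ∧
      ∀ ξ : ℝ, ξ ≠ (1 / ε₂) * Real.log (1 / M₂) →
        c * deriv (fun x => max (Real.exp (lam₁ * x) * (1 - M₂ * Real.exp (ε₂ * x))) 0) ξ ≤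
          d₂ * lap θ (fun x => max (Real.exp (lam₁ * x) * (1 - M₂ * Real.exp (ε₂ * x))) 0) ξ
            + β * Sminus ξ * max (Real.exp (lam₁ * ξ) * (1 - M₂ * Real.exp (ε₂ * ξ))) 0 /
                (1 + α * max (Real.exp (lam₁ * ξ) * (1 - M₂ * Real.exp (ε₂ * ξ))) 0)
            - μ₂ * max (Real.exp (lam₁ * ξ) * (1 - M₂ * Real.exp (ε₂ * ξ))) 0 := by
  have hS₀pos : 0 < S₀ := hS₀ ▸ div_pos hΛ hμ₁
  obtain ⟨ε₂, hε₂, hε₂min⟩ := exists_between (lt_min hε₁ (lt_min hlam₁ (sub_pos.2 hlam₁₂)))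
  obtain ⟨hε₂ε₁, hε₂lam₁, hε₂gap⟩ : ε₂ < ε₁ ∧ ε₂ < lam₁ ∧ ε₂ < lam₂ - lam₁ := by
    simpa only [lt_min_iff] using hε₂min
  have hD : 0 < -charDelta d₂ β S₀ μ₂ θ c (lam₁ + ε₂) :=
    neg_pos.2 (hneg _ (by linarith) (by linarith))
  obtain ⟨M₂, hM₂⟩ := exists_gt (max 1 (β * S₀ * (M₁ + α) / -charDelta d₂ β S₀ μ₂ θ c (lam₁ + ε₂)))
  rw [max_lt_iff, div_lt_iff₀ hD] at hM₂
  refine ⟨ε₂, M₂, hε₂, lt_min hε₂lam₁ hε₂gap, hM₂.1, fun ξ hξ => ?_⟩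
  rw [hSminus ξ]
  rcases hξ.lt_or_gt with hlt | hgt
  · exact lowerSolution_ineq_of_lt_threshold hd₂.le hβ.le hα.le hS₀pos.le (by linarith) hε₂
      hε₂ε₁.le hε₂lam₁.le hM₂.1 hroot₁ hM₂.2.le hlt
  · exact lowerSolution_ineq_of_gt_threshold _ hd₂.le hε₂ (by linarith) hgt

theorem stmt_7 (Λ β α μ₁ μ₂ d₁ d₂ θ : ℝ)
    (hΛ : 0 < Λ) (hβ : 0 < β) (hα : 0 < α) (hμ₁ : 0 < μ₁) (hμ₂ : 0 < μ₂)
    (hd₁ : 0 < d₁) (hd₂ : 0 < d₂)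
    (S₀ : ℝ) (hS₀ : S₀ = Λ / μ₁) (hR₀ : 1 < β * S₀ / μ₂)
    (cstar lamstar c lam₁ lam₂ : ℝ)
    (hcstar : 0 < cstar) (hlamstar : 0 < lamstar)
    (hcritroot : charDelta d₂ β S₀ μ₂ θ cstar lamstar = 0)
    (hcritderiv : deriv (charDelta d₂ β S₀ μ₂ θ cstar) lamstar = 0)
    (hc : cstar < c)
    (hlam₁ : 0 < lam₁) (hlam₁₂ : lam₁ < lam₂)
    (hroot₁ : charDelta d₂ β S₀ μ₂ θ c lam₁ = 0)
    (hroot₂ : charDelta d₂ β S₀ μ₂ θ c lam₂ = 0)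
    (hneg : ∀ lam : ℝ, lam₁ < lam → lam < lam₂ → charDelta d₂ β S₀ μ₂ θ c lam < 0)
    (I₀ : ℝ) (hI₀ : (β * S₀ - μ₂) / (α * μ₂) ≤ I₀)
    (Iplus Sminus : ℝ → ℝ)
    (hIplus : ∀ ξ, Iplus ξ = min (Real.exp (lam₁ * ξ)) I₀)
    (ε₁ M₁ : ℝ) (hε₁ : 0 < ε₁) (hε₁lam₁ : ε₁ < lam₁) (hM₁ : 1 < M₁)
    (hSminus : ∀ ξ, Sminus ξ = max (S₀ * (1 - M₁ * Real.exp (ε₁ * ξ))) 0)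
    (hSlower : ∀ ξ : ℝ, ξ ≠ (1 / ε₁) * Real.log (1 / M₁) →
      c * deriv Sminus ξ ≤
        d₁ * lap θ Sminus ξ + Λ - β * Sminus ξ * Iplus ξ / (1 + α * Iplus ξ) - μ₁ * Sminus ξ) :
    ∃ ε₂ M₂ : ℝ, 0 < ε₂ ∧ ε₂ < min lam₁ (lam₂ - lam₁) ∧ 1 < M₂ ∧
      ∀ ξ : ℝ, ξ ≠ (1 / ε₂) * Real.log (1 / M₂) →
        c * deriv (fun x => max (Real.exp (lam₁ * x) * (1 - M₂ * Real.exp (ε₂ * x))) 0) ξ ≤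
          d₂ * lap θ (fun x => max (Real.exp (lam₁ * x) * (1 - M₂ * Real.exp (ε₂ * x))) 0) ξ
            + β * Sminus ξ * max (Real.exp (lam₁ * ξ) * (1 - M₂ * Real.exp (ε₂ * ξ))) 0 /
                (1 + α * max (Real.exp (lam₁ * ξ) * (1 - M₂ * Real.exp (ε₂ * ξ))) 0)
            - μ₂ * max (Real.exp (lam₁ * ξ) * (1 - M₂ * Real.exp (ε₂ * ξ))) 0 :=
  stmt_7_general Λ β α μ₁ μ₂ d₂ θ hΛ hβ hα hμ₁ hd₂ S₀ hS₀ c lam₁ lam₂ hlam₁ hlam₁₂ hroot₁ hneg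
    Sminus ε₁ M₁ hε₁ hM₁ hSminus
end

section
/- In the setting of the upper and lower solutions S⁺ ≡ S₀, I⁺, S⁻, I⁻ (with parameters Λ, β, α, μ₁, μ₂, d₁, d₂ > 0, S₀ = Λ/μ₁, βS₀/μ₂ > 1, c > c*), let X > max{−𝔅₁, −𝔅₂} where 𝔅₁ = (1/ε₁)ln(1/M₁) and 𝔅₂ = (1/ε₂)ln(1/M₂), and fix κ ≥ β/α. Let (φ, ψ) be continuous on [−X, X] with S⁻ ≤ φ ≤ S₀, I⁻ ≤ ψ ≤ I⁺, φ(−X) = S⁻(−X), ψ(−X) = I⁻(−X); extend φ to φ̂ on ℝ by φ̂(ξ) = φ(X) for ξ > X and φ̂(ξ) = S⁻(ξ) for ξ < −X, and extend ψ to ψ̂ analogously using I⁻. Suppose (S, I) ∈ C¹([−X, X]; ℝ²) solves the linear initial value problem cS'(ξ) + (4d₁ + μ₁ + κ)S(ξ) = d₁[φ̂(ξ + sin θ) + φ̂(ξ − sin θ) + φ̂(ξ + cos θ) + φ̂(ξ − cos θ)] + Λ − βφ(ξ)ψ(ξ)/(1 + αψ(ξ)) + κφ(ξ), cI'(ξ)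 + (4d₂ + μ₂)I(ξ) = d₂[ψ̂(ξ + sin θ) + ψ̂(ξ − sin θ) + ψ̂(ξ + cos θ) + ψ̂(ξ − cos θ)] + βφ(ξ)ψ(ξ)/(1 + αψ(ξ)), with S(−X) = S⁻(−X), I(−X) = I⁻(−X). Then S⁻(ξ) ≤ S(ξ) ≤ S₀ and I⁻(ξ) ≤ I(ξ) ≤ I⁺(ξ) for all ξ ∈ [−X, X]. -/
open Real Set Filter Topology

theorem monotoneOn_Icc_of_hasDerivAt_nonneg_of_ne {f f' : ℝ → ℝ} {a b m : ℝ}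
    (hf : ContinuousOn f (Icc a b)) (hf' : ∀ x ∈ Ioo a b, x ≠ m → HasDerivAt f (f' x) x)
    (hnn : ∀ x ∈ Ioo a b, x ≠ m → 0 ≤ f' x) : MonotoneOn f (Icc a b) := by
  have piece : ∀ {a' b'}, a ≤ a' → b' ≤ b → m ∉ Ioo a' b' → MonotoneOn f (Icc a' b') := by
    intro a' b' ha hb hm
    have hsub : Ioo a' b' ⊆ Ioo a b := Ioo_subset_Ioo ha hb
    have hne : ∀ x ∈ Ioo a' b', x ≠ m := fun x hx h => hm (h ▸ hx)
    refine monotoneOn_of_deriv_nonneg (convex_Icc a' b') (hf.mono (Icc_subset_Icc ha hb))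
      ?_ ?_ <;> rw [interior_Icc]
    · exact fun x hx => (hf' x (hsub hx) (hne x hx)).differentiableAt.differentiableWithinAt
    · intro x hx
      rw [(hf' x (hsub hx) (hne x hx)).deriv]
      exact hnn x (hsub hx) (hne x hx)
  by_cases hm : m ∈ Ioo a b
  · rw [← Icc_union_Icc_eq_Icc hm.1.le hm.2.le]
    exact (piece le_rfl hm.2.le fun h => h.2.false).union_right
      (piece hm.1.le le_rfl fun h => h.1.false) (isGreatest_Icc hm.1.le) (isLeast_Icc hm.2.le)
  · exact piece le_rfl le_rfl hm

theorem le_on_Icc_of_deriv_add_mul_le {a b c k m : ℝ} (hc : 0 < c) {u v u' v' : ℝ → ℝ}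
    (hu : ContinuousOn u (Icc a b)) (hv : ContinuousOn v (Icc a b))
    (hu' : ∀ x ∈ Ioo a b, x ≠ m → HasDerivWithinAt u (u' x) (Icc a b) x)
    (hv' : ∀ x ∈ Ioo a b, x ≠ m → HasDerivWithinAt v (v' x) (Icc a b) x)
    (h : ∀ x ∈ Ioo a b, x ≠ m → c * u' x + k * u x ≤ c * v' x + k * v x)
    (ha : u a ≤ v a) : ∀ x ∈ Icc a b, u x ≤ v x := by
  set w : ℝ → ℝ := fun x => exp (k / c * x) * (v x - u x)
  have hmono : MonotoneOn w (Icc a b) := by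
    refine monotoneOn_Icc_of_hasDerivAt_nonneg_of_ne (m := m)
      (f' := fun x => exp (k / c * x) * (k / c) * (v x - u x) + exp (k / c * x) * (v' x - u' x))
      ((continuous_exp.comp (continuous_const_mul _)).continuousOn.mul (hv.sub hu))
      (fun x hx hxm => ?_) (fun x hx hxm => ?_)
    · have hexp : HasDerivAt (fun x => exp (k / c * x)) (exp (k / c * x) * (k / c)) x := by
        simpa using ((hasDerivAt_id' x).const_mul (k / c)).exp
      exact hexp.mul (((hv' x hx hxm).sub (hu' x hx hxm)).hasDerivAt (Icc_mem_nhds hx.1 hx.2))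
    · have hsum : 0 ≤ k / c * (v x - u x) + (v' x - u' x) := by
        rw [div_mul_eq_mul_div, div_add' _ _ _ hc.ne']
        exact div_nonneg (by linarith [h x hx hxm]) hc.le
      have := mul_nonneg (exp_pos (k / c * x)).le hsum
      linarith
  intro x hx
  have hwx : 0 ≤ w x := (mul_nonneg (exp_pos _).le (sub_nonneg.2 ha)).trans
    (hmono (left_mem_Icc.2 (hx.1.trans hx.2)) hx hx.1)
  exact sub_nonneg.1 (nonneg_of_mul_nonneg_right hwx (exp_pos _))

theorem DifferentiableAt.max_of_ne {u v : ℝ → ℝ} {x : ℝ} (hu : DifferentiableAt ℝ u x)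
    (hv : DifferentiableAt ℝ v x) (hne : u x ≠ v x) :
    DifferentiableAt ℝ (fun y => max (u y) (v y)) x := by
  rcases hne.lt_or_gt with h | h
  · refine hv.congr_of_eventuallyEq ?_
    filter_upwards [hu.continuousAt.eventually_lt hv.continuousAt h] with y hy
    exact max_eq_right hy.le
  · refine hu.congr_of_eventuallyEq ?_
    filter_upwards [hv.continuousAt.eventually_lt hu.continuousAt h] with y hy
    exact max_eq_left hy.le

theorem DifferentiableAt.min_of_ne {u v : ℝ → ℝ} {x : ℝ} (hu : DifferentiableAt ℝ u x)
    (hv : DifferentiableAt ℝ v x) (hne : u x ≠ v x) :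
    DifferentiableAt ℝ (fun y => min (u y) (v y)) x := by
  rcases hne.lt_or_gt with h | h
  · refine hu.congr_of_eventuallyEq ?_
    filter_upwards [hu.continuousAt.eventually_lt hv.continuousAt h] with y hy
    exact min_eq_left hy.le
  · refine hv.congr_of_eventuallyEq ?_
    filter_upwards [hv.continuousAt.eventually_lt hu.continuousAt h] with y hy
    exact min_eq_right hy.le

theorem exp_mul_one_div_mul_log {l C : ℝ} (hl : l ≠ 0) (hC : 0 < C) :
    exp (l * (1 / l * log C)) = C := by
  rw [← mul_assoc, mul_one_div_cancel hl, one_mul, exp_log hC]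

section LowerProfile

variable {f g : ℝ → ℝ} {M ε ξ : ℝ}

theorem strictAnti_one_sub_mul_exp (hM : 0 < M) (hε : 0 < ε) :
    StrictAnti fun ξ => 1 - M * exp (ε * ξ) :=
  fun _ _ h => sub_lt_sub_left (mul_lt_mul_of_pos_left (exp_lt_exp.2 (by gcongr)) hM) 1

theorem one_sub_mul_exp_mul_log_eq_zero (hM : 0 < M) (hε : 0 < ε) :
    1 - M * exp (ε * (1 / ε * log (1 / M))) = 0 := by
  rw [exp_mul_one_div_mul_log hε.ne' (one_div_pos.2 hM), mul_one_div_cancel hM.ne', sub_self]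

theorem lowerProfile_le (hM : 0 ≤ M) (hg : ∀ ξ, 0 ≤ g ξ)
    (hf : ∀ ξ, f ξ = max (g ξ * (1 - M * exp (ε * ξ))) 0) (ξ : ℝ) : f ξ ≤ g ξ := by
  rw [hf]
  refine max_le ?_ (hg ξ)
  nlinarith [hg ξ, mul_nonneg hM (exp_pos (ε * ξ)).le]

theorem lowerProfile_pos (hM : 0 < M) (hε : 0 < ε) (hg : ∀ ξ, 0 < g ξ)
    (hf : ∀ ξ, f ξ = max (g ξ * (1 - M * exp (ε * ξ))) 0) (hξ : ξ < 1 / ε * log (1 / M)) :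
    0 < f ξ := by
  have := (one_sub_mul_exp_mul_log_eq_zero hM hε).symm.trans_lt
    (strictAnti_one_sub_mul_exp hM hε hξ)
  rw [hf]
  exact lt_max_of_lt_left (mul_pos (hg ξ) this)

theorem lowerProfile_eq_zero (hM : 0 < M) (hε : 0 < ε) (hg : ∀ ξ, 0 ≤ g ξ)
    (hf : ∀ ξ, f ξ = max (g ξ * (1 - M * exp (ε * ξ))) 0) (hξ : 1 / ε * log (1 / M) ≤ ξ) :
    f ξ = 0 := by
  have := ((strictAnti_one_sub_mul_exp hM hε).antitone hξ).trans_eq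
    (one_sub_mul_exp_mul_log_eq_zero hM hε)
  rw [hf]
  exact max_eq_right (mul_nonpos_of_nonneg_of_nonpos (hg ξ) this)

theorem differentiableAt_lowerProfile (hM : 0 < M) (hε : 0 < ε) (hg : ∀ ξ, 0 < g ξ)
    (hgd : Differentiable ℝ g) (hf : ∀ ξ, f ξ = max (g ξ * (1 - M * exp (ε * ξ))) 0)
    (hξ : ξ ≠ 1 / ε * log (1 / M)) : DifferentiableAt ℝ f ξ := by
  rw [show f = _ from funext hf]
  refine DifferentiableAt.max_of_ne (by fun_prop) (differentiableAt_const 0)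
    (mul_ne_zero (hg ξ).ne' ?_)
  rw [← one_sub_mul_exp_mul_log_eq_zero hM hε]
  exact (strictAnti_one_sub_mul_exp hM hε).injective.ne hξ

theorem continuous_lowerProfile (hgc : Continuous g)
    (hf : ∀ ξ, f ξ = max (g ξ * (1 - M * exp (ε * ξ))) 0) : Continuous f := by
  rw [show f = _ from funext hf]
  fun_prop

end LowerProfile

theorem antitone_lowerProfile_const {f : ℝ → ℝ} {A M ε : ℝ} (hA : 0 ≤ A) (hM : 0 ≤ M)
    (hε : 0 ≤ ε) (hf : ∀ ξ, f ξ = max (A * (1 - M * exp (ε * ξ))) 0) : Antitone f := by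
  intro a b hab
  rw [hf, hf]
  gcongr

section UpperProfile

variable {f : ℝ → ℝ} {l C : ℝ}

theorem continuous_upperProfile (hf : ∀ ξ, f ξ = min (exp (l * ξ)) C) : Continuous f := by
  rw [show f = _ from funext hf]
  fun_prop

theorem monotone_upperProfile (hl : 0 ≤ l) (hf : ∀ ξ, f ξ = min (exp (l * ξ)) C) :
    Monotone f := by
  intro a b hab
  rw [hf, hf]
  gcongr

theorem differentiableAt_upperProfile (hl : l ≠ 0) (hf : ∀ ξ, f ξ = min (exp (l * ξ)) C)
    {ξ : ℝ} (hξ : ξ ≠ 1 / l * log C) : DifferentiableAt ℝ f ξ := by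
  rw [show f = _ from funext hf]
  refine DifferentiableAt.min_of_ne (by fun_prop) (differentiableAt_const C) fun h => hξ ?_
  rw [← h, log_exp]
  field_simp

end UpperProfile

theorem saturated_incidence_le {α s₁ s₂ t₁ t₂ : ℝ} (hα : 0 < α) (hs₁ : 0 ≤ s₁) (hs : s₁ ≤ s₂)
    (ht₁ : 0 ≤ t₁) (ht : t₁ ≤ t₂) :
    s₁ * t₁ / (1 + α * t₁) ≤ s₂ * t₂ / (1 + α * t₂) := by
  rw [div_le_div_iff₀ (by positivity) (by nlinarith)]
  nlinarith [mul_le_mul hs ht ht₁ (hs₁.trans hs), mul_nonneg (sub_nonneg.2 hs) (mul_nonneg hα.le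
    (mul_nonneg ht₁ (ht₁.trans ht)))]

-- `β t / (1 + α t) < β / α ≤ κ` bounds the slope in `s`; the change in `t` has the right sign.
theorem saturated_incidence_sub_le {α β κ s₁ s₂ t₁ t₂ : ℝ} (hα : 0 < α) (hβ : 0 < β)
    (hκ : β / α ≤ κ) (hs₁ : 0 ≤ s₁) (hs : s₁ ≤ s₂) (ht₁ : 0 ≤ t₁) (ht : t₁ ≤ t₂) :
    β * s₂ * t₁ / (1 + α * t₁) - β * s₁ * t₂ / (1 + α * t₂) ≤ κ * (s₂ - s₁) := by
  have hden : 0 < 1 + α * t₁ := by positivity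
  have hlip : β * s₂ * t₁ / (1 + α * t₁) - β * s₁ * t₁ / (1 + α * t₁) ≤ κ * (s₂ - s₁) := by
    rw [div_sub_div_same, div_le_iff₀ hden]
    have hβκ : β ≤ κ * α := (div_le_iff₀ hα).1 hκ
    nlinarith [mul_nonneg (sub_nonneg.2 hs) ht₁, mul_nonneg (sub_nonneg.2 hs) hden.le]
  have hmono := saturated_incidence_le hα (mul_nonneg hβ.le hs₁) le_rfl ht₁ ht
  linarith

theorem sum_shifts_le_sum_shifts {f g : ℝ → ℝ} (θ ξ : ℝ) (h : ∀ y, f y ≤ g y) :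
    f (ξ + sin θ) + f (ξ - sin θ) + f (ξ + cos θ) + f (ξ - cos θ) ≤
      g (ξ + sin θ) + g (ξ - sin θ) + g (ξ + cos θ) + g (ξ - cos θ) :=
  add_le_add (add_le_add (add_le_add (h _) (h _)) (h _)) (h _)

theorem lap_nonpos_of_forall_le {f : ℝ → ℝ} {p : ℝ} (θ : ℝ) (hp : ∀ y, f y ≤ f p) :
    lap θ f p ≤ 0 := by
  unfold lap
  linarith [hp (p + sin θ), hp (p - sin θ), hp (p + cos θ), hp (p - cos θ)]

theorem subsolution_max_le {f : ℝ → ℝ} {p c d b B α μ θ : ℝ} (hd : 0 ≤ d)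
    (hα : 0 < α) (hμ : 0 < μ) (hbB : b ≤ B) (hp : ∀ y, f y ≤ f p) (hfp : 0 < f p)
    (hineq : c * deriv f p ≤ d * lap θ f p + b * f p / (1 + α * f p) - μ * f p) :
    f p ≤ (B - μ) / (α * μ) := by
  have hderiv : deriv f p = 0 :=
    (IsMaxOn.isLocalMax (isMaxOn_univ_iff.2 hp) univ_mem).deriv_eq_zero
  have hlap := mul_nonpos_of_nonneg_of_nonpos hd (lap_nonpos_of_forall_le θ hp)
  have hden : 0 < 1 + α * f p := by positivity
  have hb : μ * f p * (1 + α * f p) ≤ B * f p := by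
    rw [← le_div_iff₀ hden]
    calc μ * f p ≤ b * f p / (1 + α * f p) := by rw [hderiv, mul_zero] at hineq; linarith
      _ ≤ B * f p / (1 + α * f p) := by gcongr
  rw [le_div_iff₀ (by positivity)]
  nlinarith

theorem exists_forall_le_of_le_exp {f : ℝ → ℝ} {l m x₀ : ℝ} (hf : Continuous f) (hl : 0 < l)
    (hexp : ∀ ξ, f ξ ≤ exp (l * ξ)) (hzero : ∀ ξ, m ≤ ξ → f ξ = 0) (hx₀ : 0 < f x₀) :
    ∃ p, 0 < f p ∧ ∀ y, f y ≤ f p := by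
  obtain ⟨p, hp⟩ := hf.exists_forall_ge' x₀ <| by
    rw [cocompact_eq_atBot_atTop, eventually_sup]
    refine ⟨?_, (eventually_ge_atTop m).mono fun ξ hξ => (hzero ξ hξ).trans_le hx₀.le⟩
    have hlim : Tendsto (fun ξ => exp (l * ξ)) atBot (𝓝 0) :=
      tendsto_exp_atBot.comp (tendsto_id.const_mul_atBot hl)
    exact (hlim.eventually (gt_mem_nhds hx₀)).mono fun ξ hξ => (hexp ξ).trans hξ.le
  exact ⟨p, hx₀.trans_le (hp x₀), hp⟩

theorem extension_mem_Icc {lo hi φ φhat : ℝ → ℝ} {X : ℝ} (hX : 0 ≤ X)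
    (hφhat : ∀ ξ, φhat ξ = if ξ < -X then lo ξ else if ξ ≤ X then φ ξ else φ X)
    (hlohi : ∀ ξ < -X, lo ξ ≤ hi ξ) (hφ : ∀ ξ ∈ Icc (-X) X, lo ξ ≤ φ ξ ∧ φ ξ ≤ hi ξ)
    (hlo : ∀ ξ, X < ξ → lo ξ ≤ lo X) (hhi : ∀ ξ, X < ξ → hi X ≤ hi ξ) (ξ : ℝ) :
    φhat ξ ∈ Icc (lo ξ) (hi ξ) := by
  rw [hφhat]
  split_ifs with h₁ h₂
  · exact ⟨le_rfl, hlohi ξ h₁⟩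
  · exact hφ ξ ⟨not_lt.1 h₁, h₂⟩
  · have hXX := hφ X ⟨by linarith, le_rfl⟩
    exact ⟨(hlo ξ (not_le.1 h₂)).trans hXX.1, hXX.2.trans (hhi ξ (not_le.1 h₂))⟩

theorem lowerProfile_le_of_subsolution {f b : ℝ → ℝ} {l M ε c d B α μ θ : ℝ} (hl : 0 < l)
    (hM : 0 < M) (hε : 0 < ε) (hd : 0 ≤ d) (hα : 0 < α) (hμ : 0 < μ) (hbB : ∀ ξ, b ξ ≤ B)
    (hf : ∀ ξ, f ξ = max (exp (l * ξ) * (1 - M * exp (ε * ξ))) 0)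
    (hineq : ∀ ξ, ξ ≠ 1 / ε * log (1 / M) →
      c * deriv f ξ ≤ d * lap θ f ξ + b ξ * f ξ / (1 + α * f ξ) - μ * f ξ) (ξ : ℝ) :
    f ξ ≤ (B - μ) / (α * μ) := by
  have hzero : ∀ ξ, 1 / ε * log (1 / M) ≤ ξ → f ξ = 0 := fun ξ =>
    lowerProfile_eq_zero hM hε (fun _ => (exp_pos _).le) hf
  obtain ⟨p, hp₀, hp⟩ := exists_forall_le_of_le_exp (continuous_lowerProfile (by fun_prop) hf) hl
    (lowerProfile_le hM.le (fun _ => (exp_pos _).le) hf) hzero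
    (lowerProfile_pos hM hε (fun _ => exp_pos _) hf (sub_one_lt _))
  have hpm : p ≠ 1 / ε * log (1 / M) := by rintro rfl; exact hp₀.ne' (hzero _ le_rfl)
  exact (hp ξ).trans (subsolution_max_le hd hα hμ (hbB p) hp hp₀ (hineq p hpm))

theorem stmt_8_general (Λ β α μ₁ μ₂ d₁ d₂ θ : ℝ)
    (hΛ : 0 < Λ) (hβ : 0 < β) (hα : 0 < α) (hμ₁ : 0 < μ₁) (hμ₂ : 0 < μ₂)
    (hd₁ : 0 < d₁) (hd₂ : 0 < d₂)
    (S₀ : ℝ) (hS₀ : S₀ = Λ / μ₁)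
    -- the wave speed c exceeds the critical speed c*
    (cstar c : ℝ) (hcstar : 0 < cstar)
    (hc : cstar < c)
    -- λ₁ < λ₂ are the two positive roots of Δ_c
    (lam₁ : ℝ) (hlam₁ : 0 < lam₁)
    -- the upper and lower solutions
    (I₀ : ℝ) (hI₀ : (β * S₀ - μ₂) / (α * μ₂) ≤ I₀)
    (ε₁ ε₂ M₁ M₂ : ℝ) (hε₁ : 0 < ε₁)
    (hε₂ : 0 < ε₂) (hM₁ : 1 < M₁) (hM₂ : 1 < M₂)
    (Sminus Iplus Iminus : ℝ → ℝ)
    (hSminus : ∀ ξ, Sminus ξ = max (S₀ * (1 - M₁ * Real.exp (ε₁ * ξ))) 0)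
    (hIplus : ∀ ξ, Iplus ξ = min (Real.exp (lam₁ * ξ)) I₀)
    (hIminus : ∀ ξ, Iminus ξ = max (Real.exp (lam₁ * ξ) * (1 - M₂ * Real.exp (ε₂ * ξ))) 0)
    -- M₁, M₂, ε₁, ε₂ chosen so that the upper/lower solution differential inequalities hold
    (hIplusIneq : ∀ ξ : ℝ, ξ ≠ (1 / lam₁) * Real.log I₀ →
      d₂ * lap θ Iplus ξ + β * S₀ * Iplus ξ / (1 + α * Iplus ξ) - μ₂ * Iplus ξ
        ≤ c * deriv Iplus ξ)
    (hSminusIneq : ∀ ξ : ℝ, ξ ≠ (1 / ε₁) * Real.log (1 / M₁) →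
      c * deriv Sminus ξ ≤
        d₁ * lap θ Sminus ξ + Λ - β * Sminus ξ * Iplus ξ / (1 + α * Iplus ξ) - μ₁ * Sminus ξ)
    (hIminusIneq : ∀ ξ : ℝ, ξ ≠ (1 / ε₂) * Real.log (1 / M₂) →
      c * deriv Iminus ξ ≤
        d₂ * lap θ Iminus ξ + β * Sminus ξ * Iminus ξ / (1 + α * Iminus ξ) - μ₂ * Iminus ξ)
    -- the truncation interval and the constant κ
    (X κ : ℝ)
    (hX : max (-((1 / ε₁) * Real.log (1 / M₁))) (-((1 / ε₂) * Real.log (1 / M₂))) < X)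
    (hκ : β / α ≤ κ)
    -- the profile pair (φ, ψ) ∈ Γ_X and its extensions
    (φ ψ φhat ψhat : ℝ → ℝ)
    (hφbd : ∀ ξ ∈ Set.Icc (-X) X, Sminus ξ ≤ φ ξ ∧ φ ξ ≤ S₀)
    (hψbd : ∀ ξ ∈ Set.Icc (-X) X, Iminus ξ ≤ ψ ξ ∧ ψ ξ ≤ Iplus ξ)
    (hφhat : ∀ ξ : ℝ, φhat ξ = if ξ < -X then Sminus ξ else if ξ ≤ X then φ ξ else φ X)
    (hψhat : ∀ ξ : ℝ, ψhat ξ = if ξ < -X then Iminus ξ else if ξ ≤ X then ψ ξ else ψ X)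
    -- the C¹ solution (S, I) of the linear initial value problem
    (S I S' I' : ℝ → ℝ)
    (hS : ∀ ξ ∈ Set.Icc (-X) X, HasDerivWithinAt S (S' ξ) (Set.Icc (-X) X) ξ)
    (hI : ∀ ξ ∈ Set.Icc (-X) X, HasDerivWithinAt I (I' ξ) (Set.Icc (-X) X) ξ)
    (hSeq : ∀ ξ ∈ Set.Icc (-X) X,
      c * S' ξ + (4 * d₁ + μ₁ + κ) * S ξ =
        d₁ * (φhat (ξ + Real.sin θ) + φhat (ξ - Real.sin θ) +
              φhat (ξ + Real.cos θ) + φhat (ξ - Real.cos θ)) +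
          Λ - β * φ ξ * ψ ξ / (1 + α * ψ ξ) + κ * φ ξ)
    (hIeq : ∀ ξ ∈ Set.Icc (-X) X,
      c * I' ξ + (4 * d₂ + μ₂) * I ξ =
        d₂ * (ψhat (ξ + Real.sin θ) + ψhat (ξ - Real.sin θ) +
              ψhat (ξ + Real.cos θ) + ψhat (ξ - Real.cos θ)) +
          β * φ ξ * ψ ξ / (1 + α * ψ ξ))
    (hSinit : S (-X) = Sminus (-X)) (hIinit : I (-X) = Iminus (-X)) :
    ∀ ξ ∈ Set.Icc (-X) X,
      Sminus ξ ≤ S ξ ∧ S ξ ≤ S₀ ∧ Iminus ξ ≤ I ξ ∧ I ξ ≤ Iplus ξ := by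
  have hc0 : 0 < c := hcstar.trans hc
  have hS₀pos : 0 < S₀ := hS₀ ▸ div_pos hΛ hμ₁
  have hΛS₀ : Λ = μ₁ * S₀ := by rw [hS₀, mul_div_cancel₀ _ hμ₁.ne']
  set ξ₂ := 1 / ε₂ * log (1 / M₂)
  have hξ₂ : ξ₂ < 0 := mul_neg_of_pos_of_neg (by positivity) (log_neg (by positivity)
    ((div_lt_one (by positivity)).2 hM₂))
  have hX₀ : 0 ≤ X := by linarith [le_max_right (-(1 / ε₁ * log (1 / M₁))) (-ξ₂)]
  have hM₁pos : 0 < M₁ := by linarith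
  have hM₂pos : 0 < M₂ := by linarith
  have hSm₀ : ∀ ξ, 0 ≤ Sminus ξ := fun ξ => (hSminus ξ).symm ▸ le_max_right _ _
  have hSmS₀ : ∀ ξ, Sminus ξ ≤ S₀ := lowerProfile_le hM₁pos.le (fun _ => hS₀pos.le) hSminus
  have hIm₀ : ∀ ξ, 0 ≤ Iminus ξ := fun ξ => (hIminus ξ).symm ▸ le_max_right _ _
  have hImZero : ∀ ξ, ξ₂ ≤ ξ → Iminus ξ = 0 := fun ξ =>
    lowerProfile_eq_zero hM₂pos hε₂ (fun _ => (exp_pos _).le) hIminus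
  have hImI₀ : ∀ ξ, Iminus ξ ≤ I₀ := fun ξ =>
    (lowerProfile_le_of_subsolution (b := fun ξ => β * Sminus ξ) hlam₁ hM₂pos hε₂ hd₂.le hα hμ₂
      (fun ξ => mul_le_mul_of_nonneg_left (hSmS₀ ξ) hβ.le) hIminus hIminusIneq ξ).trans hI₀
  have hImIp : ∀ ξ, Iminus ξ ≤ Iplus ξ := fun ξ => (hIplus ξ).symm ▸
    le_min (lowerProfile_le hM₂pos.le (fun _ => (exp_pos _).le) hIminus ξ) (hImI₀ ξ)
  have hφhat := extension_mem_Icc (hi := fun _ => S₀) hX₀ hφhat (fun ξ _ => hSmS₀ ξ) hφbd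
    (fun ξ hξ => antitone_lowerProfile_const hS₀pos.le hM₁pos.le hε₁.le hSminus hξ.le)
    fun _ _ => le_rfl
  have hψhat := extension_mem_Icc hX₀ hψhat (fun ξ _ => hImIp ξ) hψbd
    (fun ξ hξ => (hImZero ξ (by linarith)).trans_le (hIm₀ X))
    (fun ξ hξ => monotone_upperProfile hlam₁.le hIplus hξ.le)
  have hφ₀ : ∀ x ∈ Icc (-X) X, 0 ≤ φ x := fun x hx => (hSm₀ x).trans (hφbd x hx).1
  have hψ₀ : ∀ x ∈ Icc (-X) X, 0 ≤ ψ x := fun x hx => (hIm₀ x).trans (hψbd x hx).1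
  have hScont : ContinuousOn S (Icc (-X) X) := fun x hx => (hS x hx).continuousWithinAt
  have hIcont : ContinuousOn I (Icc (-X) X) := fun x hx => (hI x hx).continuousWithinAt
  have hSlow : ∀ ξ ∈ Icc (-X) X, Sminus ξ ≤ S ξ := by
    refine le_on_Icc_of_deriv_add_mul_le hc0 (k := 4 * d₁ + μ₁ + κ)
      (continuous_lowerProfile (by fun_prop) hSminus).continuousOn hScont
      (fun x _ hx => (differentiableAt_lowerProfile hM₁pos hε₁ (fun _ => hS₀pos)
        (differentiable_const S₀) hSminus hx).hasDerivAt.hasDerivWithinAt)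
      (fun x hx _ => hS x (Ioo_subset_Icc_self hx))
      (fun x hx hxm => ?_) hSinit.ge
    have hx := Ioo_subset_Icc_self hx
    have hin := hSminusIneq x hxm
    unfold lap at hin
    linarith [hSeq x hx, mul_le_mul_of_nonneg_left
      (sum_shifts_le_sum_shifts θ x fun y => (hφhat y).1) hd₁.le,
      saturated_incidence_sub_le hα hβ hκ (hSm₀ x) (hφbd x hx).1 (hψ₀ x hx) (hψbd x hx).2]
  have hSup : ∀ ξ ∈ Icc (-X) X, S ξ ≤ S₀ := by
    refine le_on_Icc_of_deriv_add_mul_le hc0 (k := 4 * d₁ + μ₁ + κ) (m := X) (v' := fun _ => 0)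
      hScont continuousOn_const (fun x hx _ => hS x (Ioo_subset_Icc_self hx))
      (fun x _ _ => hasDerivWithinAt_const x _ S₀)
      (fun x hx _ => ?_) (hSinit ▸ hSmS₀ (-X))
    have hx := Ioo_subset_Icc_self hx
    have hinc : 0 ≤ β * φ x * ψ x / (1 + α * ψ x) := by
      have := hφ₀ x hx
      have := hψ₀ x hx
      positivity
    linarith [hSeq x hx, mul_le_mul_of_nonneg_left
      (sum_shifts_le_sum_shifts (g := fun _ => S₀) θ x fun y => (hφhat y).2) hd₁.le,
      mul_le_mul_of_nonneg_left (hφbd x hx).2 ((div_pos hβ hα).le.trans hκ)]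
  have hIlow : ∀ ξ ∈ Icc (-X) X, Iminus ξ ≤ I ξ := by
    refine le_on_Icc_of_deriv_add_mul_le hc0 (k := 4 * d₂ + μ₂)
      (continuous_lowerProfile (by fun_prop) hIminus).continuousOn hIcont
      (fun x _ hx => (differentiableAt_lowerProfile hM₂pos hε₂ (fun _ => exp_pos _)
        (by fun_prop) hIminus hx).hasDerivAt.hasDerivWithinAt)
      (fun x hx _ => hI x (Ioo_subset_Icc_self hx))
      (fun x hx hxm => ?_) hIinit.ge
    have hx := Ioo_subset_Icc_self hx
    have hin := hIminusIneq x hxm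
    unfold lap at hin
    linarith [hIeq x hx, mul_le_mul_of_nonneg_left
      (sum_shifts_le_sum_shifts θ x fun y => (hψhat y).1) hd₂.le,
      saturated_incidence_le hα (mul_nonneg hβ.le (hSm₀ x))
        (mul_le_mul_of_nonneg_left (hφbd x hx).1 hβ.le) (hIm₀ x) (hψbd x hx).1]
  have hIup : ∀ ξ ∈ Icc (-X) X, I ξ ≤ Iplus ξ := by
    refine le_on_Icc_of_deriv_add_mul_le hc0 (k := 4 * d₂ + μ₂)
      hIcont (continuous_upperProfile hIplus).continuousOn
      (fun x hx _ => hI x (Ioo_subset_Icc_self hx))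
      (fun x _ hx =>
        (differentiableAt_upperProfile hlam₁.ne' hIplus hx).hasDerivAt.hasDerivWithinAt)
      (fun x hx hxm => ?_) (hIinit ▸ hImIp (-X))
    have hx := Ioo_subset_Icc_self hx
    have hin := hIplusIneq x hxm
    unfold lap at hin
    linarith [hIeq x hx, mul_le_mul_of_nonneg_left
      (sum_shifts_le_sum_shifts θ x fun y => (hψhat y).2) hd₂.le,
      saturated_incidence_le hα (mul_nonneg hβ.le (hφ₀ x hx))
        (mul_le_mul_of_nonneg_left (hφbd x hx).2 hβ.le) (hψ₀ x hx) (hψbd x hx).2]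
  exact fun ξ hξ => ⟨hSlow ξ hξ, hSup ξ hξ, hIlow ξ hξ, hIup ξ hξ⟩

theorem stmt_8 (Λ β α μ₁ μ₂ d₁ d₂ θ : ℝ)
    (hΛ : 0 < Λ) (hβ : 0 < β) (hα : 0 < α) (hμ₁ : 0 < μ₁) (hμ₂ : 0 < μ₂)
    (hd₁ : 0 < d₁) (hd₂ : 0 < d₂)
    (S₀ : ℝ) (hS₀ : S₀ = Λ / μ₁) (hR₀ : 1 < β * S₀ / μ₂)
    -- the wave speed c exceeds the critical speed c*
    (cstar lamstar c : ℝ) (hcstar : 0 < cstar) (hlamstar : 0 < lamstar)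
    (hcritroot : charDelta d₂ β S₀ μ₂ θ cstar lamstar = 0)
    (hcritderiv : deriv (charDelta d₂ β S₀ μ₂ θ cstar) lamstar = 0)
    (hc : cstar < c)
    -- λ₁ < λ₂ are the two positive roots of Δ_c
    (lam₁ lam₂ : ℝ) (hlam₁ : 0 < lam₁) (hlam₁₂ : lam₁ < lam₂)
    (hroot₁ : charDelta d₂ β S₀ μ₂ θ c lam₁ = 0)
    (hroot₂ : charDelta d₂ β S₀ μ₂ θ c lam₂ = 0)
    -- the upper and lower solutions
    (I₀ : ℝ) (hI₀ : (β * S₀ - μ₂) / (α * μ₂) ≤ I₀)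
    (ε₁ ε₂ M₁ M₂ : ℝ) (hε₁ : 0 < ε₁) (hε₁lam₁ : ε₁ < lam₁)
    (hε₂ : 0 < ε₂) (hε₂lam₁ : ε₂ < lam₁) (hM₁ : 1 < M₁) (hM₂ : 1 < M₂)
    (Sminus Iplus Iminus : ℝ → ℝ)
    (hSminus : ∀ ξ, Sminus ξ = max (S₀ * (1 - M₁ * Real.exp (ε₁ * ξ))) 0)
    (hIplus : ∀ ξ, Iplus ξ = min (Real.exp (lam₁ * ξ)) I₀)
    (hIminus : ∀ ξ, Iminus ξ = max (Real.exp (lam₁ * ξ) * (1 - M₂ * Real.exp (ε₂ * ξ))) 0)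
    -- M₁, M₂, ε₁, ε₂ chosen so that the upper/lower solution differential inequalities hold
    (hIplusIneq : ∀ ξ : ℝ, ξ ≠ (1 / lam₁) * Real.log I₀ →
      d₂ * lap θ Iplus ξ + β * S₀ * Iplus ξ / (1 + α * Iplus ξ) - μ₂ * Iplus ξ
        ≤ c * deriv Iplus ξ)
    (hSminusIneq : ∀ ξ : ℝ, ξ ≠ (1 / ε₁) * Real.log (1 / M₁) →
      c * deriv Sminus ξ ≤
        d₁ * lap θ Sminus ξ + Λ - β * Sminus ξ * Iplus ξ / (1 + α * Iplus ξ) - μ₁ * Sminus ξ)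
    (hIminusIneq : ∀ ξ : ℝ, ξ ≠ (1 / ε₂) * Real.log (1 / M₂) →
      c * deriv Iminus ξ ≤
        d₂ * lap θ Iminus ξ + β * Sminus ξ * Iminus ξ / (1 + α * Iminus ξ) - μ₂ * Iminus ξ)
    -- the truncation interval and the constant κ
    (X κ : ℝ)
    (hX : max (-((1 / ε₁) * Real.log (1 / M₁))) (-((1 / ε₂) * Real.log (1 / M₂))) < X)
    (hκ : β / α ≤ κ)
    -- the profile pair (φ, ψ) ∈ Γ_X and its extensions
    (φ ψ φhat ψhat : ℝ → ℝ)
    (hφcont : ContinuousOn φ (Set.Icc (-X) X)) (hψcont : ContinuousOn ψ (Set.Icc (-X) X))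
    (hφbd : ∀ ξ ∈ Set.Icc (-X) X, Sminus ξ ≤ φ ξ ∧ φ ξ ≤ S₀)
    (hψbd : ∀ ξ ∈ Set.Icc (-X) X, Iminus ξ ≤ ψ ξ ∧ ψ ξ ≤ Iplus ξ)
    (hφinit : φ (-X) = Sminus (-X)) (hψinit : ψ (-X) = Iminus (-X))
    (hφhat : ∀ ξ : ℝ, φhat ξ = if ξ < -X then Sminus ξ else if ξ ≤ X then φ ξ else φ X)
    (hψhat : ∀ ξ : ℝ, ψhat ξ = if ξ < -X then Iminus ξ else if ξ ≤ X then ψ ξ else ψ X)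
    -- the C¹ solution (S, I) of the linear initial value problem
    (S I S' I' : ℝ → ℝ)
    (hS : ∀ ξ ∈ Set.Icc (-X) X, HasDerivWithinAt S (S' ξ) (Set.Icc (-X) X) ξ)
    (hI : ∀ ξ ∈ Set.Icc (-X) X, HasDerivWithinAt I (I' ξ) (Set.Icc (-X) X) ξ)
    (hSeq : ∀ ξ ∈ Set.Icc (-X) X,
      c * S' ξ + (4 * d₁ + μ₁ + κ) * S ξ =
        d₁ * (φhat (ξ + Real.sin θ) + φhat (ξ - Real.sin θ) +
              φhat (ξ + Real.cos θ) + φhat (ξ - Real.cos θ)) +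
          Λ - β * φ ξ * ψ ξ / (1 + α * ψ ξ) + κ * φ ξ)
    (hIeq : ∀ ξ ∈ Set.Icc (-X) X,
      c * I' ξ + (4 * d₂ + μ₂) * I ξ =
        d₂ * (ψhat (ξ + Real.sin θ) + ψhat (ξ - Real.sin θ) +
              ψhat (ξ + Real.cos θ) + ψhat (ξ - Real.cos θ)) +
          β * φ ξ * ψ ξ / (1 + α * ψ ξ))
    (hSinit : S (-X) = Sminus (-X)) (hIinit : I (-X) = Iminus (-X)) :
    ∀ ξ ∈ Set.Icc (-X) X,
      Sminus ξ ≤ S ξ ∧ S ξ ≤ S₀ ∧ Iminus ξ ≤ I ξ ∧ I ξ ≤ Iplus ξ :=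
  stmt_8_general Λ β α μ₁ μ₂ d₁ d₂ θ hΛ hβ hα hμ₁ hμ₂ hd₁ hd₂ S₀ hS₀ cstar c hcstar hc lam₁ hlam₁ I₀
    hI₀ ε₁ ε₂ M₁ M₂ hε₁ hε₂ hM₁ hM₂ Sminus Iplus Iminus hSminus hIplus hIminus hIplusIneq
    hSminusIneq hIminusIneq X κ hX hκ φ ψ φhat ψhat hφbd hψbd hφhat hψhat S I S' I' hS hI hSeq hIeq
    hSinit hIinit
end

section
/- Let Λ, β, α, μ₁, μ₂, d₂ > 0, θ ∈ ℝ, S₀ = Λ/μ₁, c > 0. Suppose S, I : ℝ → ℝ with I continuously differentiable, I(ξ) > 0 and S(ξ) > 0 for all ξ, I bounded on ℝ, and I satisfies cI'(ξ) = d₂𝔍[I](ξ) + βS(ξ)I(ξ)/(1 + αI(ξ)) − μ₂I(ξ) for all ξ ∈ ℝ. Assume there is μ₀ > 0 with sup_{ξ∈ℝ} e^{−μ₀ξ}I(ξ) < ∞ and sup_{ξ∈ℝ} e^{−μ₀ξ}|I'(ξ)| < ∞. Then for every real λ with 0 < λ < μ₀, the two-sided Laplace transform 𝓛(λ) = ∫_{−∞}^{+∞}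 e^{−λξ} I(ξ) dξ converges, the integral on the right below converges, and Δ_c(λ)·𝓛(λ) = ∫_{−∞}^{+∞} e^{−λξ} [βS₀I(ξ) − βS(ξ)I(ξ)/(1 + αI(ξ))] dξ, where Δ_c(λ) = d₂(e^{λ sin θ} + e^{−λ sin θ} + e^{λ cos θ} + e^{−λ cos θ} − 4) − cλ + βS₀ − μ₂. -/
/-!
Multiply the equation by `e^{-λξ}` and integrate over `ℝ`. The four shifts in the discrete
Laplacian become the factors `e^{±λ sin θ}`, `e^{±λ cos θ}`, and `c I'` contributes `c λ 𝓛(λ)`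
after integrating `(e^{-λξ} I)'` to zero, since `e^{-λξ} I` vanishes at `±∞` (boundedness of `I`
at `+∞`, the `e^{μ₀ξ}` bound at `-∞`). The one delicate point is integrability: `e^{-λξ} I'` is
not known to be integrable a priori. It is recovered from the sign of the incidence term:
`e^{-λξ} βSI/(1+αI) ≥ 0` is the derivative of `c e^{-λξ} I` (which has limits at `±∞`) plus a
continuous integrable function, and a nonnegative derivative of a function with limits at `±∞`
is integrable.
-/

open MeasureTheory Real Set Filter Topology

theorem integrable_deriv_of_nonneg {g g' : ℝ → ℝ} {a b : ℝ}
    (hderiv : ∀ x, HasDerivAt g (g' x) x) (hpos : ∀ x, 0 ≤ g' x)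
    (hbot : Tendsto g atBot (𝓝 a)) (htop : Tendsto g atTop (𝓝 b)) : Integrable g' := by
  have hcont : Continuous g := continuous_iff_continuousAt.2 fun x => (hderiv x).continuousAt
  have hint : ∀ x y, IntervalIntegrable g' volume x y := fun x y =>
    intervalIntegral.intervalIntegrable_deriv_of_nonneg hcont.continuousOn
      (fun z _ => hderiv z) (fun z _ => hpos z)
  refine integrable_of_intervalIntegral_norm_tendsto (b - a)
    (fun i => intervalIntegral.integrableOn_deriv_of_nonneg hcont.continuousOn
      (fun z _ => hderiv z) (fun z _ => hpos z)) tendsto_neg_atTop_atBot tendsto_id ?_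
  simp_rw [Real.norm_of_nonneg (hpos _),
    intervalIntegral.integral_eq_sub_of_hasDerivAt (fun x _ => hderiv x) (hint _ _)]
  exact htop.sub (hbot.comp tendsto_neg_atTop_atBot)

theorem intervalIntegral_tendsto_neg_integral_Iic {G : ℝ → ℝ} (hG : Integrable G) :
    Tendsto (fun x => ∫ t in 0..x, G t) atBot (𝓝 (-∫ t in Iic 0, G t)) := by
  simp_rw [intervalIntegral.integral_symm _ (0 : ℝ)]
  exact (intervalIntegral_tendsto_integral_Iic 0 hG.integrableOn tendsto_id).neg

section DerivAdd

variable {F F' G : ℝ → ℝ} {a b : ℝ}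

theorem integrable_deriv_add_of_nonneg (hF : ∀ x, HasDerivAt F (F' x) x) (hG : Integrable G)
    (hGc : Continuous G) (hpos : ∀ x, 0 ≤ F' x + G x) (hbot : Tendsto F atBot (𝓝 a))
    (htop : Tendsto F atTop (𝓝 b)) : Integrable fun x => F' x + G x :=
  integrable_deriv_of_nonneg (g := fun x => F x + ∫ t in 0..x, G t)
    (fun x => (hF x).add (hGc.integral_hasStrictDerivAt 0 x).hasDerivAt) hpos
    (hbot.add (intervalIntegral_tendsto_neg_integral_Iic hG))
    (htop.add (intervalIntegral_tendsto_integral_Ioi 0 hG.integrableOn tendsto_id))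

theorem integral_deriv_add_of_nonneg (hF : ∀ x, HasDerivAt F (F' x) x) (hG : Integrable G)
    (hGc : Continuous G) (hpos : ∀ x, 0 ≤ F' x + G x) (hbot : Tendsto F atBot (𝓝 a))
    (htop : Tendsto F atTop (𝓝 b)) : ∫ x, F' x + G x = b - a + ∫ x, G x := by
  have hF' : Integrable F' :=
    ((integrable_deriv_add_of_nonneg hF hG hGc hpos hbot htop).sub hG).congr
      (Eventually.of_forall fun x => add_sub_cancel_right (F' x) (G x))
  rw [integral_add hF' hG, integral_of_hasDerivAt_of_tendsto hF hF' hbot htop]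

end DerivAdd

section ExpWeighted

variable {lam μ₀ B K : ℝ} {I : ℝ → ℝ}

theorem exp_neg_mul_mul_comp_add_eq (s ξ : ℝ) :
    exp (-lam * ξ) * I (ξ + s) = exp (lam * s) * (exp (-lam * (ξ + s)) * I (ξ + s)) := by
  rw [← mul_assoc, ← Real.exp_add]
  ring_nf

theorem integrable_exp_neg_mul_mul_comp_add (hI : Integrable fun ξ => exp (-lam * ξ) * I ξ)
    (s : ℝ) : Integrable fun ξ => exp (-lam * ξ) * I (ξ + s) := by
  simp_rw [exp_neg_mul_mul_comp_add_eq s]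
  exact (hI.comp_add_right s).const_mul _

theorem integral_exp_neg_mul_mul_comp_add (s : ℝ) :
    ∫ ξ, exp (-lam * ξ) * I (ξ + s) = exp (lam * s) * ∫ ξ, exp (-lam * ξ) * I ξ := by
  simp_rw [exp_neg_mul_mul_comp_add_eq s, integral_const_mul]
  rw [integral_add_right_eq_self (fun ξ => exp (-lam * ξ) * I ξ) s]

theorem exp_neg_mul_mul_lap (θ ξ : ℝ) :
    exp (-lam * ξ) * lap θ I ξ =
      exp (-lam * ξ) * I (ξ + sin θ) + exp (-lam * ξ) * I (ξ + -sin θ) +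
        exp (-lam * ξ) * I (ξ + cos θ) + exp (-lam * ξ) * I (ξ + -cos θ) -
          4 * (exp (-lam * ξ) * I ξ) := by
  simp only [lap, ← sub_eq_add_neg]
  ring

theorem integrable_exp_neg_mul_mul_lap (hI : Integrable fun ξ => exp (-lam * ξ) * I ξ)
    (θ : ℝ) : Integrable fun ξ => exp (-lam * ξ) * lap θ I ξ := by
  have hshift := integrable_exp_neg_mul_mul_comp_add hI
  simp_rw [exp_neg_mul_mul_lap]
  fun_prop

theorem integral_exp_neg_mul_mul_lap (hI : Integrable fun ξ => exp (-lam * ξ) * I ξ) (θ : ℝ) :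
    ∫ ξ, exp (-lam * ξ) * lap θ I ξ =
      (exp (lam * sin θ) + exp (-(lam * sin θ)) + exp (lam * cos θ) + exp (-(lam * cos θ)) - 4) *
        ∫ ξ, exp (-lam * ξ) * I ξ := by
  have hshift := integrable_exp_neg_mul_mul_comp_add hI
  simp_rw [exp_neg_mul_mul_lap]
  rw [integral_sub (by fun_prop) (hI.const_mul 4), integral_add (by fun_prop) (hshift _),
    integral_add (by fun_prop) (hshift _), integral_add (hshift _) (hshift _),
    integral_exp_neg_mul_mul_comp_add, integral_exp_neg_mul_mul_comp_add,
    integral_exp_neg_mul_mul_comp_add, integral_exp_neg_mul_mul_comp_add, integral_const_mul]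
  ring_nf

theorem exp_neg_mul_mul_le_of_le (hB : ∀ ξ, I ξ ≤ B) (ξ : ℝ) :
    exp (-lam * ξ) * I ξ ≤ B * exp (-lam * ξ) := by
  rw [mul_comm]
  exact mul_le_mul_of_nonneg_right (hB ξ) (exp_pos _).le

theorem exp_neg_mul_mul_le_of_exp_neg_mul_mul_le (hK : ∀ ξ, exp (-μ₀ * ξ) * I ξ ≤ K) (ξ : ℝ) :
    exp (-lam * ξ) * I ξ ≤ K * exp ((μ₀ - lam) * ξ) := by
  have h : exp (-lam * ξ) * I ξ = exp ((μ₀ - lam) * ξ) * (exp (-μ₀ * ξ) * I ξ) := by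
    rw [← mul_assoc, ← Real.exp_add]
    ring_nf
  rw [h, mul_comm K]
  exact mul_le_mul_of_nonneg_left (hK ξ) (exp_pos _).le

theorem tendsto_exp_neg_mul_mul_atTop (hI0 : ∀ ξ, 0 ≤ I ξ) (hB : ∀ ξ, I ξ ≤ B) (hlam : 0 < lam) :
    Tendsto (fun ξ => exp (-lam * ξ) * I ξ) atTop (𝓝 0) := by
  have h : Tendsto (fun ξ => B * exp (-lam * ξ)) atTop (𝓝 0) := by
    simpa using (tendsto_exp_atBot.comp
      (tendsto_id.const_mul_atTop_of_neg (neg_neg_of_pos hlam))).const_mul B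
  exact squeeze_zero (fun ξ => mul_nonneg (exp_pos _).le (hI0 ξ))
    (exp_neg_mul_mul_le_of_le hB) h

theorem tendsto_exp_neg_mul_mul_atBot (hI0 : ∀ ξ, 0 ≤ I ξ)
    (hK : ∀ ξ, exp (-μ₀ * ξ) * I ξ ≤ K) (hlam : lam < μ₀) :
    Tendsto (fun ξ => exp (-lam * ξ) * I ξ) atBot (𝓝 0) := by
  have h : Tendsto (fun ξ => K * exp ((μ₀ - lam) * ξ)) atBot (𝓝 0) := by
    simpa using (tendsto_exp_atBot.comp
      (tendsto_id.const_mul_atBot (sub_pos.2 hlam))).const_mul K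
  exact squeeze_zero (fun ξ => mul_nonneg (exp_pos _).le (hI0 ξ))
    (exp_neg_mul_mul_le_of_exp_neg_mul_mul_le hK) h

theorem integrable_exp_neg_mul_mul (hI : Continuous I) (hI0 : ∀ ξ, 0 ≤ I ξ) (hB : ∀ ξ, I ξ ≤ B)
    (hK : ∀ ξ, exp (-μ₀ * ξ) * I ξ ≤ K) (hlam : 0 < lam) (hlamμ : lam < μ₀) :
    Integrable fun ξ => exp (-lam * ξ) * I ξ := by
  have hmeas : AEStronglyMeasurable (fun ξ => exp (-lam * ξ) * I ξ) :=
    (by fun_prop : Continuous fun ξ => exp (-lam * ξ) * I ξ).aestronglyMeasurable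
  have hnorm (ξ : ℝ) : ‖exp (-lam * ξ) * I ξ‖ = exp (-lam * ξ) * I ξ :=
    norm_of_nonneg (mul_nonneg (exp_pos _).le (hI0 ξ))
  rw [← integrableOn_univ, ← Iic_union_Ioi (a := (0 : ℝ))]
  refine IntegrableOn.union ?_ ?_
  · refine ((integrableOn_exp_mul_Iic (sub_pos.2 hlamμ) 0).const_mul K).mono' hmeas.restrict ?_
    exact Eventually.of_forall fun ξ =>
      (hnorm ξ).trans_le (exp_neg_mul_mul_le_of_exp_neg_mul_mul_le hK ξ)
  · refine ((exp_neg_integrableOn_Ioi 0 hlam).const_mul B).mono' hmeas.restrict ?_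
    exact Eventually.of_forall fun ξ => (hnorm ξ).trans_le (exp_neg_mul_mul_le_of_le hB ξ)

theorem hasDerivAt_exp_neg_mul_mul {I' : ℝ → ℝ} {ξ : ℝ} (hI : HasDerivAt I (I' ξ) ξ) :
    HasDerivAt (fun ξ => exp (-lam * ξ) * I ξ)
      (-lam * (exp (-lam * ξ) * I ξ) + exp (-lam * ξ) * I' ξ) ξ := by
  have hE : HasDerivAt (fun ξ => exp (-lam * ξ)) (exp (-lam * ξ) * -lam) ξ := by
    simpa using ((hasDerivAt_id ξ).const_mul (-lam)).exp
  exact (hE.fun_mul hI).congr_deriv (by ring)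

theorem integrable_and_integral_exp_neg_mul_mul_source {c d₂ μ₂ θ : ℝ} {N : ℝ → ℝ}
    (hI : Differentiable ℝ I) (hF : Integrable fun ξ => exp (-lam * ξ) * I ξ)
    (hbot : Tendsto (fun ξ => exp (-lam * ξ) * I ξ) atBot (𝓝 0))
    (htop : Tendsto (fun ξ => exp (-lam * ξ) * I ξ) atTop (𝓝 0)) (hN : ∀ ξ, 0 ≤ N ξ)
    (heq : ∀ ξ, c * deriv I ξ = d₂ * lap θ I ξ + N ξ - μ₂ * I ξ) :
    (Integrable fun ξ => exp (-lam * ξ) * N ξ) ∧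
      ∫ ξ, exp (-lam * ξ) * N ξ = (c * lam + μ₂ - d₂ * (exp (lam * sin θ) +
        exp (-(lam * sin θ)) + exp (lam * cos θ) + exp (-(lam * cos θ)) - 4)) *
          ∫ ξ, exp (-lam * ξ) * I ξ := by
  set G : ℝ → ℝ := fun ξ =>
    (c * lam + μ₂) * (exp (-lam * ξ) * I ξ) - d₂ * (exp (-lam * ξ) * lap θ I ξ) with hG_def
  have hsource (ξ : ℝ) : exp (-lam * ξ) * N ξ =
      c * (-lam * (exp (-lam * ξ) * I ξ) + exp (-lam * ξ) * deriv I ξ) + G ξ := by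
    linear_combination -exp (-lam * ξ) * heq ξ
  have hG : Integrable G :=
    (hF.const_mul _).sub ((integrable_exp_neg_mul_mul_lap hF θ).const_mul d₂)
  have hGc : Continuous G := by
    have := hI.continuous
    simp only [hG_def, lap]
    fun_prop
  have hderiv (ξ : ℝ) := (hasDerivAt_exp_neg_mul_mul (lam := lam) (hI ξ).hasDerivAt).const_mul c
  have hpos (ξ : ℝ) := (hsource ξ).symm.trans_ge (mul_nonneg (exp_pos _).le (hN ξ))
  have hbot' := hbot.const_mul c
  have htop' := htop.const_mul c
  rw [mul_zero] at hbot' htop'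
  simp_rw [hsource]
  refine ⟨integrable_deriv_add_of_nonneg hderiv hG hGc hpos hbot' htop', ?_⟩
  rw [integral_deriv_add_of_nonneg hderiv hG hGc hpos hbot' htop', sub_self, zero_add,
    integral_sub (hF.const_mul _) ((integrable_exp_neg_mul_mul_lap hF θ).const_mul d₂),
    integral_const_mul, integral_const_mul, integral_exp_neg_mul_mul_lap hF]
  ring

end ExpWeighted

theorem stmt_19_general (β α μ₂ d₂ θ c : ℝ)
    (hβ : 0 < β) (hα : 0 < α)
    (S₀ : ℝ)
    (S I : ℝ → ℝ) (hIC1 : ContDiff ℝ 1 I)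
    (hIpos : ∀ ξ : ℝ, 0 < I ξ) (hSpos : ∀ ξ : ℝ, 0 < S ξ)
    (hIbdd : ∃ B : ℝ, ∀ ξ : ℝ, I ξ ≤ B)
    (hIeq : ∀ ξ : ℝ, c * deriv I ξ =
      d₂ * lap θ I ξ + β * S ξ * I ξ / (1 + α * I ξ) - μ₂ * I ξ)
    (μ₀ : ℝ)
    (hIgrow : ∃ K : ℝ, ∀ ξ : ℝ, Real.exp (-μ₀ * ξ) * I ξ ≤ K) :
    ∀ lam : ℝ, 0 < lam → lam < μ₀ →
      MeasureTheory.Integrable (fun ξ : ℝ => Real.exp (-lam * ξ) * I ξ) ∧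
      MeasureTheory.Integrable (fun ξ : ℝ =>
        Real.exp (-lam * ξ) * (β * S₀ * I ξ - β * S ξ * I ξ / (1 + α * I ξ))) ∧
      charDelta d₂ β S₀ μ₂ θ c lam * (∫ ξ : ℝ, Real.exp (-lam * ξ) * I ξ) =
        ∫ ξ : ℝ, Real.exp (-lam * ξ) * (β * S₀ * I ξ - β * S ξ * I ξ / (1 + α * I ξ)) := by
  intro lam hlam hlamμ
  obtain ⟨B, hB⟩ := hIbdd
  obtain ⟨K, hK⟩ := hIgrow
  have hI0 (ξ : ℝ) : 0 ≤ I ξ := (hIpos ξ).le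
  have hF := integrable_exp_neg_mul_mul hIC1.continuous hI0 hB hK hlam hlamμ
  have hincidence_nonneg (ξ : ℝ) : 0 ≤ β * S ξ * I ξ / (1 + α * I ξ) := by
    have := hIpos ξ
    have := hSpos ξ
    positivity
  obtain ⟨hN, hNval⟩ := integrable_and_integral_exp_neg_mul_mul_source
    (hIC1.differentiable one_ne_zero) hF (tendsto_exp_neg_mul_mul_atBot hI0 hK hlamμ)
    (tendsto_exp_neg_mul_mul_atTop hI0 hB hlam) hincidence_nonneg hIeq
  have hsplit (ξ : ℝ) : exp (-lam * ξ) * (β * S₀ * I ξ - β * S ξ * I ξ / (1 + α * I ξ)) =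
      β * S₀ * (exp (-lam * ξ) * I ξ) - exp (-lam * ξ) * (β * S ξ * I ξ / (1 + α * I ξ)) := by
    ring
  simp_rw [hsplit]
  refine ⟨hF, (hF.const_mul _).sub hN, ?_⟩
  rw [integral_sub (hF.const_mul _) hN, integral_const_mul, hNval, charDelta]
  ring

theorem stmt_19 (Λ β α μ₁ μ₂ d₂ θ c : ℝ)
    (hΛ : 0 < Λ) (hβ : 0 < β) (hα : 0 < α) (hμ₁ : 0 < μ₁) (hμ₂ : 0 < μ₂)
    (hd₂ : 0 < d₂) (hc : 0 < c)
    (S₀ : ℝ) (hS₀ : S₀ = Λ / μ₁)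
    (S I : ℝ → ℝ) (hIC1 : ContDiff ℝ 1 I)
    (hIpos : ∀ ξ : ℝ, 0 < I ξ) (hSpos : ∀ ξ : ℝ, 0 < S ξ)
    (hIbdd : ∃ B : ℝ, ∀ ξ : ℝ, I ξ ≤ B)
    (hIeq : ∀ ξ : ℝ, c * deriv I ξ =
      d₂ * lap θ I ξ + β * S ξ * I ξ / (1 + α * I ξ) - μ₂ * I ξ)
    (μ₀ : ℝ) (hμ₀ : 0 < μ₀)
    (hIgrow : ∃ K : ℝ, ∀ ξ : ℝ, Real.exp (-μ₀ * ξ) * I ξ ≤ K)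
    (hI'grow : ∃ K : ℝ, ∀ ξ : ℝ, Real.exp (-μ₀ * ξ) * |deriv I ξ| ≤ K) :
    ∀ lam : ℝ, 0 < lam → lam < μ₀ →
      MeasureTheory.Integrable (fun ξ : ℝ => Real.exp (-lam * ξ) * I ξ) ∧
      MeasureTheory.Integrable (fun ξ : ℝ =>
        Real.exp (-lam * ξ) * (β * S₀ * I ξ - β * S ξ * I ξ / (1 + α * I ξ))) ∧
      charDelta d₂ β S₀ μ₂ θ c lam * (∫ ξ : ℝ, Real.exp (-lam * ξ) * I ξ) =
        ∫ ξ : ℝ, Real.exp (-lam * ξ) * (β * S₀ * I ξ - β * S ξ * I ξ / (1 + α * I ξ)) :=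
  stmt_19_general β α μ₂ d₂ θ c hβ hα S₀ S I hIC1 hIpos hSpos hIbdd hIeq μ₀ hIgrow
end
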